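/- arXiv:1606.07800 — 9 statements merged into one kernel-verified Lean document; each statement's English description precedes it below -/
import Mathlib

section
/- In the ring B = k[z][b_n : n ∈ ℤ]/(b_n^2 - (z+n)^2 : n ∈ ℤ), every ideal of the form (b_n + (-1)^{ε(n)}(z+n) : n ∈ ℤ), for a choice of signs ε : ℤ → {0,1}, is a minimal prime ideal. -/
noncomputable section
open MvPolynomial

/-- The polynomial ring `k[z][b_n : n ∈ ℤ]`, with `z = X none`, `b_n = X (some n)`. -/
abbrev SB (k : Type) [Field k] := MvPolynomial (Option ℤ) k

/-- The variable `z`. -/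
def zP (k : Type) [Field k] : SB k := X none

/-- The variable `b_n`. -/
def bP (k : Type) [Field k] (n : ℤ) : SB k := X (some n)

/-- The ideal generated by `b_n^2 - (z+n)^2`, `n ∈ ℤ`. -/
def relB (k : Type) [Field k] : Ideal (SB k) :=
  Ideal.span (Set.range fun n : ℤ => bP k n ^ 2 - (zP k + (n : SB k)) ^ 2)

/-- The ring `B = k[z][b_n : n ∈ ℤ]/(b_n^2 - (z+n)^2 : n ∈ ℤ)`. -/
abbrev B (k : Type) [Field k] := SB k ⧸ relB k

/-- The image of `b_n` in `B`. -/
def bB (k : Type) [Field k] (n : ℤ) : B k := Ideal.Quotient.mk (relB k) (bP k n)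

/-- The image of `z` in `B`. -/
def zB (k : Type) [Field k] : B k := Ideal.Quotient.mk (relB k) (zP k)

section Aux
variable (k : Type) [Field k] (ε : ℤ → Fin 2)

/-- The sign `(-1)^{ε n}` as an element of `SB k`. -/
def sgn (n : ℤ) : SB k := (-1) ^ (ε n : ℕ)

lemma sgn_sq (n : ℤ) : sgn k ε n * sgn k ε n = 1 := by
  rw [sgn, ← pow_add, ← two_mul, pow_mul, neg_one_sq, one_pow]

/-- Generators of the ideal `P_ε`. -/
def genP (n : ℤ) : SB k := bP k n + sgn k ε n * (zP k + (n : SB k))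

/-- The ideal `(b_n + (-1)^{ε n}(z+n) : n)` inside `SB k`. -/
def Iε : Ideal (SB k) := Ideal.span (Set.range (genP k ε))

/-- The substitution `z ↦ z`, `b_n ↦ -(-1)^{ε n}(z+n)`. -/
def ψ : SB k →ₐ[k] SB k :=
  aeval (fun i => Option.rec (X none) (fun n => - sgn k ε n * (X none + (n : SB k))) i)

lemma ψ_z : ψ k ε (zP k) = zP k := by simp [ψ, zP]

lemma ψ_int (n : ℤ) : ψ k ε ((n : SB k)) = (n : SB k) := map_intCast _ n

lemma ψ_sgn (n : ℤ) : ψ k ε (sgn k ε n) = sgn k ε n := by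
  simp [sgn]

lemma ψ_b (n : ℤ) : ψ k ε (bP k n) = - sgn k ε n * (zP k + (n : SB k)) := by
  simp [ψ, bP, zP]

lemma ψ_gen (n : ℤ) : ψ k ε (genP k ε n) = 0 := by
  simp only [genP, map_add, map_mul, ψ_b, ψ_sgn, ψ_z, ψ_int]
  ring

lemma sub_ψ_mem (p : SB k) : p - ψ k ε p ∈ Iε k ε := by
  induction p using MvPolynomial.induction_on with
  | C a => simp [ψ]
  | add p q hp hq =>
    have : p + q - ψ k ε (p + q) = (p - ψ k ε p) + (q - ψ k ε q) := by
      rw [map_add]; ring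
    rw [this]; exact Ideal.add_mem _ hp hq
  | mul_X p i hp =>
    have hXi : X i - ψ k ε (X i) ∈ Iε k ε := by
      cases i with
      | none => simp [ψ]
      | some n =>
        have : X (some n) - ψ k ε (X (some n)) = genP k ε n := by
          rw [show ψ k ε (X (some n)) = ψ k ε (bP k n) from rfl, ψ_b, genP, bP]
          ring
        rw [this]
        exact Ideal.subset_span ⟨n, rfl⟩
    have : p * X i - ψ k ε (p * X i) =
        (p - ψ k ε p) * X i + ψ k ε p * (X i - ψ k ε (X i)) := by
      rw [map_mul]; ring
    rw [this]
    exact Ideal.add_mem _ (Ideal.mul_mem_right _ _ hp) (Ideal.mul_mem_left _ _ hXi)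

lemma ker_ψ : RingHom.ker (ψ k ε).toRingHom = Iε k ε := by
  apply le_antisymm
  · intro p hp
    have h0 : ψ k ε p = 0 := hp
    have := sub_ψ_mem k ε p
    rwa [h0, sub_zero] at this
  · rw [Iε, Ideal.span_le]
    rintro _ ⟨n, rfl⟩
    exact ψ_gen k ε n

lemma relB_le_Iε : relB k ≤ Iε k ε := by
  rw [relB, Ideal.span_le]
  rintro _ ⟨n, rfl⟩
  show bP k n ^ 2 - (zP k + (n : SB k)) ^ 2 ∈ Iε k ε
  have h := sgn_sq k ε n
  have : bP k n ^ 2 - (zP k + (n : SB k)) ^ 2 =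
      genP k ε n * (bP k n - sgn k ε n * (zP k + (n : SB k))) := by
    rw [genP]; linear_combination (zP k + (n : SB k)) ^ 2 * h
  rw [this]
  exact Ideal.mul_mem_right _ _ (Ideal.subset_span ⟨n, rfl⟩)

end Aux

set_option maxHeartbeats 1000000 in
set_option synthInstance.maxHeartbeats 400000 in
/-- in `B`, every ideal `(b_n + (-1)^{ε n}(z+n) : n ∈ ℤ)` given by a choice
of signs `ε : ℤ → {0,1}` is a minimal prime ideal. -/
theorem stmt1 (k : Type) [Field k] [IsAlgClosed k] [CharZero k] (ε : ℤ → Fin 2) :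
    Ideal.span (Set.range fun n : ℤ =>
      bB k n + (-1) ^ (ε n : ℕ) * (zB k + (n : B k))) ∈ minimalPrimes (B k) := by
  classical
  set mk := Ideal.Quotient.mk (relB k) with hmk
  -- the ideal in the statement is the image of `Iε`
  have hPeq : Ideal.span (Set.range fun n : ℤ =>
      bB k n + (-1) ^ (ε n : ℕ) * (zB k + (n : B k))) = (Iε k ε).map mk := by
    have hfun : (fun n : ℤ => bB k n + (-1) ^ (ε n : ℕ) * (zB k + (n : B k))) =
        fun n => mk (genP k ε n) := by
      funext n
      simp only [genP, sgn, map_add, map_mul, map_pow, map_neg, map_one, map_intCast, bB, zB]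
      rfl
    rw [hfun, Iε, Ideal.map_span, ← Set.range_comp]
    rfl
  set P : Ideal (B k) := (Iε k ε).map mk with hP
  rw [hPeq]
  -- the lifted map `B → SB`
  have hle : relB k ≤ RingHom.ker (ψ k ε).toRingHom := by
    rw [ker_ψ]; exact relB_le_Iε k ε
  set φ : B k →+* SB k := Ideal.Quotient.lift (relB k) (ψ k ε).toRingHom hle with hφ
  have hker : RingHom.ker φ = P := by
    rw [hφ, Ideal.ker_quotient_lift, ker_ψ, hP]
  have hprime : P.IsPrime := by
    rw [← hker]; exact RingHom.ker_isPrime φ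
  have hφmk : ∀ p : SB k, φ (mk p) = ψ k ε p := fun p => rfl
  -- z + n is not in P
  have hzn : ∀ n : ℤ, (2 : SB k) * sgn k ε n * (zP k + (n : SB k)) ≠ 0 := by
    intro n
    have h2 : (2 : SB k) ≠ 0 := two_ne_zero
    have hs : sgn k ε n ≠ 0 := pow_ne_zero _ (neg_ne_zero.mpr one_ne_zero)
    have hz : zP k + (n : SB k) ≠ 0 := by
      intro h
      have h1 := congrArg (eval fun _ : Option ℤ => (1 - n : k)) h
      simp [zP] at h1
    exact mul_ne_zero (mul_ne_zero h2 hs) hz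
  constructor
  · exact ⟨hprime, bot_le⟩
  · rintro Q ⟨hQprime, -⟩ hQle
    -- show P ≤ Q
    rw [hP, Iε, Ideal.map_span, Ideal.span_le]
    rintro _ ⟨_, ⟨n, rfl⟩, rfl⟩
    -- mk (genP n) * mk (genP' n) = 0
    have hrel : mk (genP k ε n) * mk (bP k n - sgn k ε n * (zP k + (n : SB k))) = 0 := by
      rw [← map_mul, Ideal.Quotient.eq_zero_iff_mem]
      have h := sgn_sq k ε n
      have : genP k ε n * (bP k n - sgn k ε n * (zP k + (n : SB k))) =
          bP k n ^ 2 - (zP k + (n : SB k)) ^ 2 := by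
        rw [genP]; linear_combination (-(zP k + (n : SB k)) ^ 2) * h
      rw [this, relB]
      exact Ideal.subset_span ⟨n, rfl⟩
    have : mk (genP k ε n) ∈ Q ∨
        mk (bP k n - sgn k ε n * (zP k + (n : SB k))) ∈ Q := by
      apply hQprime.mem_or_mem
      rw [hrel]; exact Q.zero_mem
    rcases this with h | h
    · exact h
    · exfalso
      have h1 : mk (bP k n - sgn k ε n * (zP k + (n : SB k))) ∈ P := hQle h
      have h2 : mk (genP k ε n) ∈ P := by
        rw [hP]; exact Ideal.mem_map_of_mem mk (Ideal.subset_span ⟨n, rfl⟩)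
      have h3 : mk ((2 : SB k) * sgn k ε n * (zP k + (n : SB k))) ∈ P := by
        have : (2 : SB k) * sgn k ε n * (zP k + (n : SB k)) =
            genP k ε n - (bP k n - sgn k ε n * (zP k + (n : SB k))) := by
          rw [genP]; ring
        rw [this, map_sub]
        exact Ideal.sub_mem _ h2 h1
      rw [← hker, RingHom.mem_ker, hφmk] at h3
      have : ψ k ε ((2 : SB k) * sgn k ε n * (zP k + (n : SB k))) =
          (2 : SB k) * sgn k ε n * (zP k + (n : SB k)) := by
        simp only [map_mul, map_add, ψ_sgn, ψ_z, ψ_int, map_ofNat]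
      rw [this] at h3
      exact hzn n h3
end
end

section
/- The ring B = k[z][b_n : n ∈ ℤ]/(b_n^2 - (z+n)^2 : n ∈ ℤ) is a reduced ring, i.e., its nilradical is zero. -/
noncomputable section
open MvPolynomial

namespace Stmt3Aux

variable {k : Type} [Field k]

/-- The sign-evaluation endomorphism. -/
def phi (e : ℤ → Bool) : SB k →ₐ[k] SB k :=
  aeval fun o => match o with
    | none => X none
    | some n => (if e n then (1 : SB k) else -1) * (X none + (n : SB k))

@[simp] lemma phi_z (e : ℤ → Bool) : phi e (X none : SB k) = X none := by
  simp [phi]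

@[simp] lemma phi_b (e : ℤ → Bool) (n : ℤ) :
    phi e (X (some n) : SB k) = (if e n then (1 : SB k) else -1) * (X none + (n : SB k)) := by
  simp [phi]

lemma relB_le_ker (e : ℤ → Bool) : relB k ≤ RingHom.ker (phi e : SB k →ₐ[k] SB k) := by
  rw [relB, Ideal.span_le]
  rintro _ ⟨n, rfl⟩
  have : phi e (bP k n ^ 2 - (zP k + (n : SB k)) ^ 2) = 0 := by
    simp only [map_sub, map_pow, map_add, bP, zP, phi_b, phi_z, map_intCast]
    by_cases h : e n <;> simp [h] <;> ring
  simpa [RingHom.mem_ker] using this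


/-- squarefree in the b-variables -/
def Sq (f : SB k) : Prop := ∀ m ∈ f.support, ∀ n : ℤ, m (some n) ≤ 1

/-- total degree in the b-variables of a monomial -/
def bdegM (m : Option ℤ →₀ ℕ) : ℕ := Finsupp.sum m fun i e => if i.isSome then e else 0

lemma bdegM_add (a b' : Option ℤ →₀ ℕ) : bdegM (a + b') = bdegM a + bdegM b' := by
  unfold bdegM
  rw [Finsupp.sum_add_index]
  · intros; simp
  · intros; split <;> simp

lemma bdegM_single (i : Option ℤ) (e : ℕ) :
    bdegM (Finsupp.single i e) = if i.isSome then e else 0 := by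
  unfold bdegM
  rcases eq_or_ne e 0 with rfl | he
  · simp
  · rw [Finsupp.sum_single_index] <;> simp

lemma le_bdegM (m : Option ℤ →₀ ℕ) (n : ℤ) : m (some n) ≤ bdegM m := by
  rcases eq_or_ne (m (some n)) 0 with h | h
  · omega
  · unfold bdegM
    have : some n ∈ m.support := Finsupp.mem_support_iff.mpr h
    calc m (some n) = (if (some n : Option ℤ).isSome then m (some n) else 0) := by simp
    _ ≤ _ := Finset.single_le_sum (f := fun i => if i.isSome then m i else 0)
        (fun i _ => by positivity) this

/-- monomials of a polynomial with vars ⊆ {none} have no b-exponents -/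
lemma bfree {p : SB k} (hp : p.vars ⊆ {none}) :
    ∀ μ ∈ p.support, ∀ j : ℤ, μ (some j) = 0 := by
  intro μ hμ j
  by_contra h
  have : (some j : Option ℤ) ∈ p.vars :=
    (mem_vars _).mpr ⟨μ, hμ, Finsupp.mem_support_iff.mpr h⟩
  simpa using hp this

lemma vars_zn (n : ℤ) : (((X none + (n : SB k)) ^ 2 : SB k)).vars ⊆ {none} := by
  refine (vars_pow _ _).trans ?_
  refine (vars_add_subset _ _).trans ?_
  have : ((n : SB k)) = C ((n : k)) := by rw [← map_intCast (C : k →+* SB k)]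
  rw [this, vars_C, vars_X]
  simp

/-- single-monomial reduction step -/
lemma mono_red {m m' : Option ℤ →₀ ℕ} {n : ℤ} (h : m = Finsupp.single (some n) 2 + m') :
    (monomial m (1 : k)) - (X none + (n : SB k)) ^ 2 * monomial m' 1 ∈ relB k := by
  have h1 : (monomial m (1 : k)) = (X (some n)) ^ 2 * monomial m' 1 := by
    rw [h, X_pow_eq_monomial, monomial_mul, one_mul]
  rw [h1, ← sub_mul]
  exact Ideal.mul_mem_right _ _ (Ideal.subset_span ⟨n, by simp [bP, zP]⟩)

lemma bdegM_eq_zero {a : Option ℤ →₀ ℕ} (h : ∀ j : ℤ, a (some j) = 0) : bdegM a = 0 := by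
  unfold bdegM
  apply Finset.sum_eq_zero
  intro i _
  match i with
  | none => simp
  | some j => simp [h j]

lemma decomp {m : Option ℤ →₀ ℕ} {n : ℤ} (h : 2 ≤ m (some n)) :
    m = Finsupp.single (some n) 2 + (m - Finsupp.single (some n) 2) := by
  ext i
  rcases eq_or_ne i (some n) with rfl | hi
  · rw [Finsupp.add_apply, Finsupp.tsub_apply, Finsupp.single_eq_same]
    omega
  · simp [Finsupp.add_apply, Finsupp.tsub_apply, Finsupp.single_apply, (Ne.symm hi)]

open Classical in
/-- the replacement polynomial for a monomial -/
def repl (m : Option ℤ →₀ ℕ) : SB k :=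
  if h : ∀ n : ℤ, m (some n) ≤ 1 then monomial m 1
  else (X none + ((Classical.choose (not_forall.mp h) : ℤ) : SB k)) ^ 2 *
    monomial (m - Finsupp.single (some (Classical.choose (not_forall.mp h))) 2) 1

lemma choose_spec' {m : Option ℤ →₀ ℕ} (h : ¬ ∀ n : ℤ, m (some n) ≤ 1) :
    2 ≤ m (some (Classical.choose (not_forall.mp h))) := by
  have := Classical.choose_spec (not_forall.mp h); omega

open Classical in
lemma repl_mem (m : Option ℤ →₀ ℕ) : monomial m (1 : k) - repl m ∈ relB k := by
  unfold repl; split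
  · simpa using Ideal.zero_mem (relB k)
  · next h => exact mono_red (decomp (choose_spec' h))

open Classical in
lemma repl_support (m : Option ℤ →₀ ℕ) : ∀ μ ∈ (repl m : SB k).support,
    (∀ n : ℤ, μ (some n) ≤ 1) ∨ (¬(∀ n : ℤ, m (some n) ≤ 1) ∧ bdegM μ + 2 ≤ bdegM m) := by
  unfold repl; split
  · next h =>
    intro μ hμ; left
    have hμ' : μ = m := by
      rw [support_monomial] at hμ
      simpa using hμ
    exact hμ' ▸ h
  · next h =>
    intro μ hμ; right
    refine ⟨h, ?_⟩
    set n := Classical.choose (not_forall.mp h) with hn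
    set m' := m - Finsupp.single (some n) 2 with hm'
    have hmem := support_mul _ _ hμ
    rw [Finset.mem_add] at hmem
    obtain ⟨a, ha, b, hb, hab⟩ := hmem
    have hb' : b = m' := by
      rw [support_monomial] at hb
      simpa using hb
    have ha' : bdegM a = 0 := bdegM_eq_zero (fun j => bfree (vars_zn n) a ha j)
    have hμd : bdegM μ = bdegM m' := by
      rw [← hab, bdegM_add, ha', hb', zero_add]
    have hmd : bdegM m = 2 + bdegM m' := by
      conv_lhs => rw [decomp (choose_spec' h)]
      rw [bdegM_add, bdegM_single, ← hm']
      simp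
    omega

lemma reduce : ∀ N (f : SB k),
    (∀ m ∈ f.support, ¬(∀ n : ℤ, m (some n) ≤ 1) → bdegM m ≤ N) →
    ∃ g, Sq g ∧ f - g ∈ relB k := by
  intro N
  induction N with
  | zero =>
    intro f hf
    refine ⟨f, ?_, by simpa using Ideal.zero_mem (relB k)⟩
    intro m hm n
    by_contra hn
    have h1 : ¬(∀ n : ℤ, m (some n) ≤ 1) := not_forall.mpr ⟨n, hn⟩
    have h2 := hf m hm h1
    have h3 := le_bdegM m n
    omega
  | succ N ih =>
    intro f hf
    set f' : SB k := ∑ m ∈ f.support, (coeff m f) • repl m with hf'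
    have hsub : f - f' ∈ relB k := by
      rw [hf']
      nth_rewrite 1 [f.as_sum]
      rw [← Finset.sum_sub_distrib]
      apply Ideal.sum_mem
      intro m _
      have he : (monomial m (coeff m f)) - coeff m f • repl m
          = coeff m f • (monomial m 1 - repl m) := by
        rw [smul_sub, smul_monomial, smul_eq_mul, mul_one]
      rw [he, smul_eq_C_mul]
      exact Ideal.mul_mem_left _ _ (repl_mem m)
    have hsupp : ∀ μ ∈ f'.support, ¬(∀ n : ℤ, μ (some n) ≤ 1) → bdegM μ ≤ N := by
      intro μ hμ hns
      obtain ⟨m, hm, hμ2⟩ := Finset.mem_biUnion.mp (MvPolynomial.support_sum hμ)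
      have hμ3 : μ ∈ (repl m : SB k).support := MvPolynomial.support_smul hμ2
      rcases repl_support m μ hμ3 with h | ⟨hm2, h⟩
      · exact absurd h hns
      · have := hf m hm hm2; omega
    obtain ⟨g, hg, hg2⟩ := ih f' hsupp
    refine ⟨g, hg, ?_⟩
    have := Ideal.add_mem _ hsub hg2
    simpa using this

lemma reduce' (f : SB k) : ∃ g, Sq g ∧ f - g ∈ relB k :=
  reduce (f.support.sup bdegM) f fun m hm _ => Finset.le_sup hm

lemma decompE {m : Option ℤ →₀ ℕ} {i : Option ℤ} {e : ℕ} (h : e ≤ m i) :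
    m = Finsupp.single i e + (m - Finsupp.single i e) := by
  ext j
  rcases eq_or_ne j i with rfl | hj
  · rw [Finsupp.add_apply, Finsupp.tsub_apply, Finsupp.single_eq_same]
    omega
  · simp [Finsupp.add_apply, Finsupp.tsub_apply, Finsupp.single_apply, (Ne.symm hj)]

lemma zn_ne (n : ℤ) : (X none + (n : SB k)) ≠ 0 := by
  intro h
  have h2 := congrArg (coeff (Finsupp.single none 1)) h
  have hC : ((n : SB k)) = C ((n : k)) := by rw [← map_intCast (C : k →+* SB k)]
  rw [coeff_add, coeff_X, hC, coeff_C] at h2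
  have hne : ¬((0 : Option ℤ →₀ ℕ) = Finsupp.single none 1) := by
    intro hh
    exact one_ne_zero (Finsupp.single_eq_zero.mp hh.symm)
  rw [if_neg hne, add_zero] at h2
  simp at h2

lemma phi_congr {e e' : ℤ → Bool} {p : SB k} (h : ∀ n : ℤ, some n ∈ p.vars → e n = e' n) :
    phi e p = phi e' p := by
  unfold phi
  rw [aeval_def, aeval_def]
  apply eval₂_congr
  intro i c hic hc
  match i with
  | none => rfl
  | some j =>
    have hj : some j ∈ p.vars :=
      (mem_vars _).mpr ⟨c, Finsupp.mem_support_iff.mpr hc, hic⟩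
    simp only [h j hj]

lemma phi_id {p : SB k} (h : ∀ v ∈ p.vars, v = none) (e : ℤ → Bool) : phi e p = p := by
  conv_rhs => rw [← aeval_X_left_apply p]
  unfold phi
  rw [aeval_def, aeval_def]
  apply eval₂_congr
  intro i c hic hc
  have hi : i = none := h i ((mem_vars _).mpr ⟨c, Finsupp.mem_support_iff.mpr hc, hic⟩)
  subst hi
  rfl

def part0 (v : Option ℤ) (g : SB k) : SB k :=
  ∑ m ∈ g.support.filter (fun m => m v = 0), monomial m (coeff m g)

def part1 (v : Option ℤ) (g : SB k) : SB k :=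
  ∑ m ∈ g.support.filter (fun m => ¬ m v = 0), monomial (m - Finsupp.single v 1) (coeff m g)

lemma part0_support {v : Option ℤ} {g : SB k} :
    ∀ μ ∈ (part0 v g).support, μ ∈ g.support ∧ μ v = 0 := by
  classical
  intro μ hμ
  obtain ⟨m, hm, hμ2⟩ := Finset.mem_biUnion.mp (MvPolynomial.support_sum hμ)
  rw [Finset.mem_filter] at hm
  rw [support_monomial, if_neg (MvPolynomial.mem_support_iff.mp hm.1)] at hμ2
  rw [Finset.mem_singleton] at hμ2
  subst hμ2
  exact hm

lemma part1_support {v : Option ℤ} {g : SB k} :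
    ∀ μ ∈ (part1 v g).support,
      ∃ m ∈ g.support, ¬ m v = 0 ∧ μ = m - Finsupp.single v 1 := by
  classical
  intro μ hμ
  obtain ⟨m, hm, hμ2⟩ := Finset.mem_biUnion.mp (MvPolynomial.support_sum hμ)
  rw [Finset.mem_filter] at hm
  rw [support_monomial, if_neg (MvPolynomial.mem_support_iff.mp hm.1)] at hμ2
  rw [Finset.mem_singleton] at hμ2
  exact ⟨m, hm.1, hm.2, hμ2⟩

lemma part_split {g : SB k} {n : ℤ} (hsq : Sq g) :
    g = X (some n) * part1 (some n) g + part0 (some n) g := by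
  conv_lhs => rw [g.as_sum]
  rw [← Finset.sum_filter_add_sum_filter_not g.support (fun m => m (some n) = 0)
    (fun m => monomial m (coeff m g)), add_comm]
  congr 1
  rw [part1, Finset.mul_sum]
  apply Finset.sum_congr rfl
  intro m hm
  rw [Finset.mem_filter] at hm
  have h1 : 1 ≤ m (some n) := Nat.one_le_iff_ne_zero.mpr hm.2
  have hX : (X (some n) : SB k) = monomial (Finsupp.single (some n) 1) 1 := by
    rw [← X_pow_eq_monomial, pow_one]
  rw [hX, monomial_mul, one_mul, ← decompE h1]

lemma two_ne (k : Type) [Field k] [CharZero k] : (2 : SB k) ≠ 0 := by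
  have h : ((2 : ℕ) : SB k) ≠ 0 := Nat.cast_ne_zero.mpr (by norm_num)
  simpa using h

lemma sq_vanish [CharZero k] : ∀ N (g : SB k),
    ((g.vars.filter fun o => o.isSome).card ≤ N) → Sq g →
    (∀ e : ℤ → Bool, phi e g = 0) → g = 0 := by
  classical
  intro N
  induction N with
  | zero =>
    intro g hcard hsq hz
    have hall : ∀ v ∈ g.vars, v = none := by
      intro v hv
      cases v with
      | none => rfl
      | some j =>
        exfalso
        have h1 : (some j : Option ℤ) ∈ g.vars.filter (fun o => o.isSome) :=
          Finset.mem_filter.mpr ⟨hv, rfl⟩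
        have h2 := Finset.card_pos.mpr ⟨_, h1⟩
        omega
    rw [← phi_id hall (fun _ => true)]
    exact hz _
  | succ N ih =>
    intro g hcard hsq hz
    by_cases hv : ∃ n : ℤ, some n ∈ g.vars
    case neg =>
      have hall : ∀ v ∈ g.vars, v = none := by
        intro v hvv
        cases v with
        | none => rfl
        | some j => exact absurd ⟨j, hvv⟩ hv
      rw [← phi_id hall (fun _ => true)]
      exact hz _
    obtain ⟨n, hn⟩ := hv
    set g1 := part1 (some n) g with hg1d
    set g0 := part0 (some n) g with hg0d
    have hsplit : g = X (some n) * g1 + g0 := part_split hsq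
    have hvars1 : ∀ j : ℤ, some j ∈ g1.vars → some j ∈ g.vars ∧ j ≠ n := by
      intro j hj
      obtain ⟨μ, hμ, hjμ⟩ := (mem_vars _).mp hj
      obtain ⟨m, hm, hmv, rfl⟩ := part1_support μ hμ
      rw [Finsupp.mem_support_iff, Finsupp.tsub_apply] at hjμ
      constructor
      · exact (mem_vars _).mpr ⟨m, hm, Finsupp.mem_support_iff.mpr (by
          intro h0
          rw [h0] at hjμ
          simp at hjμ)⟩
      · intro hjn
        subst hjn
        have h1 := hsq m hm j
        rw [Finsupp.single_eq_same] at hjμ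
        omega
    have hvars0 : ∀ j : ℤ, some j ∈ g0.vars → some j ∈ g.vars ∧ j ≠ n := by
      intro j hj
      obtain ⟨μ, hμ, hjμ⟩ := (mem_vars _).mp hj
      obtain ⟨hμg, hμn⟩ := part0_support μ hμ
      refine ⟨(mem_vars _).mpr ⟨μ, hμg, hjμ⟩, ?_⟩
      intro hjn
      subst hjn
      rw [Finsupp.mem_support_iff] at hjμ
      exact hjμ hμn
    have hcards : ∀ p : SB k, (∀ j : ℤ, some j ∈ p.vars → some j ∈ g.vars ∧ j ≠ n) →
        ((p.vars.filter fun o => o.isSome).card ≤ N) := by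
      intro p hp
      have hsub : (p.vars.filter fun o => o.isSome)
          ⊆ ((g.vars.filter fun o => o.isSome).erase (some n)) := by
        intro v hvv
        rw [Finset.mem_filter] at hvv
        cases v with
        | none => simp at hvv
        | some j =>
          have h1 := hp j hvv.1
          exact Finset.mem_erase.mpr ⟨by simpa using h1.2, Finset.mem_filter.mpr ⟨h1.1, rfl⟩⟩
      have h2 := Finset.card_le_card hsub
      have h3 : ((g.vars.filter fun o => o.isSome).erase (some n)).card
          = (g.vars.filter fun o => o.isSome).card - 1 :=
        Finset.card_erase_of_mem (Finset.mem_filter.mpr ⟨hn, rfl⟩)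
      omega
    have hcard1 := hcards g1 hvars1
    have hcard0 := hcards g0 hvars0
    have hsq1 : Sq g1 := by
      intro μ hμ j
      obtain ⟨m, hm, _, rfl⟩ := part1_support μ hμ
      rw [Finsupp.tsub_apply]
      have := hsq m hm j
      omega
    have hsq0 : Sq g0 := fun μ hμ j => hsq μ (part0_support μ hμ).1 j
    have hupdate : ∀ (e : ℤ → Bool) (b : Bool) (p : SB k),
        (∀ j : ℤ, some j ∈ p.vars → j ≠ n) →
        phi (Function.update e n b) p = phi e p := by
      intro e b p hp
      apply phi_congr
      intro j hj
      rw [Function.update_of_ne (hp j hj)]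
    have key1 : ∀ e : ℤ → Bool, phi e g1 = 0 := by
      intro e
      have t1 := hz (Function.update e n true)
      have t2 := hz (Function.update e n false)
      rw [hsplit] at t1 t2
      simp only [map_add, map_mul, phi_b, Function.update_self, if_true, Bool.false_eq_true,
        if_false] at t1 t2
      rw [hupdate e true g1 (fun j hj => (hvars1 j hj).2),
        hupdate e true g0 (fun j hj => (hvars0 j hj).2)] at t1
      rw [hupdate e false g1 (fun j hj => (hvars1 j hj).2),
        hupdate e false g0 (fun j hj => (hvars0 j hj).2)] at t2
      have h3 : (2 * (X none + (n : SB k))) * phi e g1 = 0 := by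
        linear_combination t1 - t2
      rcases mul_eq_zero.mp h3 with h4 | h4
      · exfalso
        rcases mul_eq_zero.mp h4 with h5 | h5
        · exact two_ne k h5
        · exact zn_ne n h5
      · exact h4
    have key0 : ∀ e : ℤ → Bool, phi e g0 = 0 := by
      intro e
      have t := hz e
      rw [hsplit, map_add, map_mul, key1 e, mul_zero, zero_add] at t
      exact t
    have h1 : g1 = 0 := ih g1 hcard1 hsq1 key1
    have h0 : g0 = 0 := ih g0 hcard0 hsq0 key0
    rw [hsplit, h1, h0, mul_zero, zero_add]

lemma key_mem [CharZero k] (f : SB k) (hf : ∀ e : ℤ → Bool, phi e f = 0) : f ∈ relB k := by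
  obtain ⟨g, hsq, hfg⟩ := reduce' f
  have hg : ∀ e : ℤ → Bool, phi e g = 0 := by
    intro e
    have h1 : phi e (f - g) = 0 := (RingHom.mem_ker).mp (relB_le_ker e hfg)
    rw [map_sub, hf e, zero_sub, neg_eq_zero] at h1
    exact h1
  have hg0 : g = 0 := sq_vanish _ g le_rfl hsq hg
  rw [hg0, sub_zero] at hfg
  exact hfg

end Stmt3Aux

/-- the ring `B` is reduced, i.e. its nilradical is zero. -/
theorem stmt3 (k : Type) [Field k] [IsAlgClosed k] [CharZero k] :
    nilradical (B k) = 0 := by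

  have hred : IsReduced (B k) := by
    refine ⟨fun x hx => ?_⟩
    obtain ⟨f, rfl⟩ := Ideal.Quotient.mk_surjective x
    obtain ⟨m, hm⟩ := hx
    rw [← map_pow, Ideal.Quotient.eq_zero_iff_mem] at hm
    have hker : ∀ e : ℤ → Bool, Stmt3Aux.phi e f = 0 := by
      intro e
      have h1 := Stmt3Aux.relB_le_ker e hm
      rw [RingHom.mem_ker, map_pow] at h1
      cases m with
      | zero => rw [pow_zero] at h1; exact absurd h1 one_ne_zero
      | succ m => exact (pow_eq_zero_iff (Nat.succ_ne_zero m)).mp h1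
    exact Ideal.Quotient.eq_zero_iff_mem.mpr (Stmt3Aux.key_mem f hker)
  exact nilradical_eq_zero (B k)
end
end

section
/- The ring B = k[z][b_n : n ∈ ℤ]/(b_n^2 - (z+n)^2 : n ∈ ℤ) is not noetherian. -/
noncomputable section
open MvPolynomial

set_option maxHeartbeats 1000000
set_option synthInstance.maxHeartbeats 400000

/-- evaluation map for level n -/
def sig (k : Type) [Field k] (n : ℕ) : Option ℤ → k :=
  fun v => match v with
  | none => 0
  | some j => if 1 ≤ j ∧ j ≤ (n : ℤ) then (-j : k) else (j : k)

lemma sig_ker (k : Type) [Field k] (n : ℕ) :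
    relB k ≤ RingHom.ker (MvPolynomial.eval (sig k n) : SB k →+* k) := by
  rw [relB, Ideal.span_le]
  rintro _ ⟨m, rfl⟩
  simp only [SetLike.mem_coe, RingHom.mem_ker, map_sub, map_pow, map_add, map_intCast]
  rw [bP, zP, eval_X, eval_X]
  simp only [sig]
  split_ifs <;> ring

/-- the ring `B` is not noetherian. -/
theorem stmt4 (k : Type) [Field k] [IsAlgClosed k] [CharZero k] :
    ¬ IsNoetherianRing (B k) := by
  intro h
  set g : ℕ → B k := fun i =>
    Ideal.Quotient.mk (relB k) (bP k ((i : ℤ)+1) + zP k + (((i : ℤ)+1 : ℤ) : SB k)) with hg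
  set f : ℕ →o Ideal (B k) :=
    ⟨fun m => Ideal.span (g '' Set.Iio m), fun a b hab =>
      Ideal.span_mono (Set.image_mono fun x hx => lt_of_lt_of_le hx hab)⟩ with hf
  obtain ⟨n, hn⟩ := monotone_stabilizes_iff_noetherian.mpr h f
  have hmem : g n ∈ f n := by
    rw [hn (n+1) (by omega)]
    exact Ideal.subset_span ⟨n, by simp, rfl⟩
  -- apply the lifted evaluation hom
  set ψ := Ideal.Quotient.lift (relB k) _ (fun a ha => RingHom.mem_ker.mp (sig_ker k n ha)) with hψ
  have hzero : ψ (g n) = 0 := by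
    have hle : f n ≤ RingHom.ker ψ := by
      rw [hf]
      refine Ideal.span_le.mpr ?_
      rintro _ ⟨i, hi, rfl⟩
      simp only [Set.mem_Iio] at hi
      simp only [SetLike.mem_coe, RingHom.mem_ker, hg, hψ, Ideal.Quotient.lift_mk]
      simp only [map_add, map_intCast, bP, zP, eval_X, sig]
      have : (1 : ℤ) ≤ (i:ℤ)+1 ∧ (i:ℤ)+1 ≤ (n:ℤ) := ⟨by omega, by omega⟩
      rw [if_pos this]
      push_cast
      ring
    exact hle hmem
  rw [hψ, hg] at hzero
  simp only [Ideal.Quotient.lift_mk, map_add, map_intCast, bP, zP, eval_X, sig] at hzero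
  rw [if_neg (by omega)] at hzero
  push_cast at hzero
  have h1 : ((n : k) + 1) ≠ 0 := Nat.cast_add_one_ne_zero n
  have h2 : (2 : k) * ((n : k) + 1) = 0 := by linear_combination hzero
  rcases mul_eq_zero.mp h2 with h | h
  · exact two_ne_zero h
  · exact h1 h
end
end

section
/- The ring B = k[z][b_n : n ∈ ℤ]/(b_n^2 - (z+n)^2 : n ∈ ℤ) has Krull dimension 1. -/
noncomputable section
open MvPolynomial

-- PID dimension bound
lemma pid_dim_le_one (R : Type*) [CommRing R] [IsDomain R] [IsPrincipalIdealRing R] :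
    ringKrullDim R ≤ 1 := by
  refine iSup_le fun p => ?_
  have hl : p.length ≤ 1 := by
    by_contra h
    push_neg at h
    have h2 : 2 ≤ p.length := h
    have h01 : p ⟨0, by omega⟩ < p ⟨1, by omega⟩ := p.strictMono (by simp [Fin.lt_def])
    have h12 : p ⟨1, by omega⟩ < p ⟨2, by omega⟩ := p.strictMono (by simp [Fin.lt_def])
    set q0 := p ⟨0, by omega⟩
    set q1 := p ⟨1, by omega⟩
    set q2 := p ⟨2, by omega⟩
    have h01' : q0.asIdeal < q1.asIdeal := h01
    have hne : q1.asIdeal ≠ ⊥ := (bot_le.trans_lt h01').ne'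
    haveI := q1.isPrime
    have hmax : q1.asIdeal.IsMaximal := IsPrime.to_maximal_ideal hne
    have hlt : q1.asIdeal < q2.asIdeal := h12
    exact hlt.ne (hmax.eq_of_le q2.isPrime.ne_top hlt.le)
  exact_mod_cast hl

-- the map B → k[t]
def psi0 (k : Type) [Field k] : SB k →ₐ[k] Polynomial k :=
  MvPolynomial.aeval (fun i => Option.rec Polynomial.X (fun n => Polynomial.X + Polynomial.C (n : k)) i)

lemma relB_le_ker (k : Type) [Field k] : relB k ≤ RingHom.ker (psi0 k).toRingHom := by
  rw [relB, Ideal.span_le]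
  rintro _ ⟨n, rfl⟩
  simp only [SetLike.mem_coe, RingHom.mem_ker, map_sub, map_pow, map_add, map_intCast]
  rw [psi0, bP, zP]
  simp [Polynomial.C_eq_intCast]

def psi (k : Type) [Field k] : B k →+* Polynomial k :=
  Ideal.Quotient.lift (relB k) (psi0 k).toRingHom (fun a ha => (relB_le_ker k) ha)

lemma psi_surjective (k : Type) [Field k] : Function.Surjective (psi k) := by
  intro f
  induction f using Polynomial.induction_on' with
  | add p q hp hq =>
    obtain ⟨a, ha⟩ := hp; obtain ⟨b, hb⟩ := hq
    exact ⟨a + b, by rw [RingHom.map_add, ha, hb]⟩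
  | monomial n a =>
    refine ⟨Ideal.Quotient.mk _ (C a * zP k ^ n), ?_⟩
    rw [psi]; erw [Ideal.Quotient.lift_mk]
    simp [psi0, zP, Polynomial.C_mul_X_pow_eq_monomial]


/-- the ring `B` has Krull dimension 1. -/
theorem stmt5 (k : Type) [Field k] [IsAlgClosed k] [CharZero k] :
    ringKrullDim (B k) = 1 := by
  -- algebra structure k[t] → B
  letI : Algebra (Polynomial k) (B k) := ((Polynomial.aeval (zB k)).toRingHom : Polynomial k →+* B k).toAlgebra
  have halg : algebraMap (Polynomial k) (B k) = (Polynomial.aeval (zB k)).toRingHom := rfl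
  -- integrality
  have hint : ∀ x : B k, IsIntegral (Polynomial k) x := by
    have hvar : ∀ i : Option ℤ, IsIntegral (Polynomial k) (Ideal.Quotient.mk (relB k) (X i)) := by
      rintro (_ | n)
      · have : (Ideal.Quotient.mk (relB k) (X none) : B k) = algebraMap (Polynomial k) (B k) Polynomial.X := by
          rw [halg]; simp [zB, zP]
        rw [this]; exact isIntegral_algebraMap
      · refine ⟨Polynomial.X ^ 2 - Polynomial.C ((Polynomial.X + (n : Polynomial k)) ^ 2),
          Polynomial.monic_X_pow_sub_C _ two_ne_zero, ?_⟩
        have hrel : (Ideal.Quotient.mk (relB k) (bP k n ^ 2 - (zP k + (n : SB k)) ^ 2) : B k) = 0 :=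
          Ideal.Quotient.eq_zero_iff_mem.mpr (Ideal.subset_span ⟨n, rfl⟩)
        simp only [Polynomial.eval₂_sub, Polynomial.eval₂_pow, Polynomial.eval₂_X, Polynomial.eval₂_C]
        rw [halg]
        simp only [AlgHom.toRingHom_eq_coe, RingHom.coe_coe, map_pow, map_add, map_intCast,
          Polynomial.aeval_X]
        rw [bP] at hrel
        rw [zB]
        simp only [map_sub, map_pow, map_add, map_intCast] at hrel
        exact hrel
    intro x
    obtain ⟨P, rfl⟩ := Ideal.Quotient.mk_surjective x
    induction P using MvPolynomial.induction_on with
    | C a =>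
      have : (Ideal.Quotient.mk (relB k) (C a) : B k) = algebraMap (Polynomial k) (B k) (Polynomial.C a) := by
        rw [halg]
        simp only [AlgHom.toRingHom_eq_coe, RingHom.coe_coe, Polynomial.aeval_C]
        rfl
      rw [this]; exact isIntegral_algebraMap
    | add p q hp hq => rw [map_add]; exact hp.add hq
    | mul_X p i hp => rw [map_mul]; exact hp.mul (hvar i)
  -- comap map on spectra
  have hle : ringKrullDim (B k) ≤ ringKrullDim (Polynomial k) := by
    refine Order.krullDim_le_of_strictMono
      (fun p => ⟨p.asIdeal.comap (algebraMap (Polynomial k) (B k)), p.isPrime.comap _⟩) ?_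
    intro p q hpq
    have hlt : p.asIdeal < q.asIdeal := hpq
    obtain ⟨x, hxq, hxp⟩ := SetLike.exists_of_lt hlt
    exact Ideal.comap_lt_comap_of_integral_mem_sdiff hlt.le ⟨hxq, hxp⟩ (hint x)
  -- lower bound: 1 ≤ dim k[t] ≤ dim B
  have hlow : (1 : WithBot (WithTop ℕ)) ≤ ringKrullDim (Polynomial k) := by
    let a : PrimeSpectrum (Polynomial k) := ⟨⊥, Ideal.bot_prime⟩
    let b : PrimeSpectrum (Polynomial k) := ⟨Ideal.span {Polynomial.X},
      (Ideal.span_singleton_prime Polynomial.X_ne_zero).mpr Polynomial.prime_X⟩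
    have hab : a < b := by
      show (⊥ : Ideal (Polynomial k)) < Ideal.span {Polynomial.X}
      rw [bot_lt_iff_ne_bot, Ne, Ideal.span_singleton_eq_bot]
      exact Polynomial.X_ne_zero
    let s : LTSeries (PrimeSpectrum (Polynomial k)) :=
      ⟨1, ![a, b], fun i => by fin_cases i; simpa using hab⟩
    have := Order.LTSeries.length_le_krullDim s
    exact_mod_cast this
  exact le_antisymm (hle.trans (pid_dim_le_one _))
    (hlow.trans (ringKrullDim_le_of_surjective (psi k) (psi_surjective k)))

end
end

section
/- The ring B = k[z][b_n : n ∈ ℤ]/(b_n^2 - (z+n)^2 : n ∈ ℤ) has infinitely many minimal prime ideals. -/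
noncomputable section
open MvPolynomial

namespace Stmt7Aux

variable (k : Type) [Field k]

/-- Evaluation `z ↦ X`, `b_n ↦ ε n • (X + n)`. -/
def phi (ε : ℤ → k) : SB k →ₐ[k] Polynomial k :=
  aeval (fun i => match i with
    | none => Polynomial.X
    | some n => Polynomial.C (ε n) * (Polynomial.X + (n : Polynomial k)))

lemma phi_z (ε : ℤ → k) : phi k ε (zP k) = Polynomial.X := by
  simp [phi, zP]

lemma phi_b (ε : ℤ → k) (n : ℤ) :
    phi k ε (bP k n) = Polynomial.C (ε n) * (Polynomial.X + (n : Polynomial k)) := by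
  simp [phi, bP]

/-- The inclusion `k[X] → SB k`, `X ↦ z`. -/
def iota : Polynomial k →ₐ[k] SB k := Polynomial.aeval (X none)

lemma phi_iota (ε : ℤ → k) (p : Polynomial k) : phi k ε (iota k p) = p := by
  have : (phi k ε).comp (iota k) = AlgHom.id k (Polynomial k) := by
    apply Polynomial.algHom_ext
    simp [iota, phi]
  calc phi k ε (iota k p) = ((phi k ε).comp (iota k)) p := rfl
  _ = p := by rw [this]; rfl

/-- Generic: for an endomorphism `ψ`, `p - ψ p` lies in any ideal containing all
`X i - ψ (X i)`. -/
lemma sub_psi_mem (ψ : SB k →ₐ[k] SB k) (Q : Ideal (SB k))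
    (h : ∀ i : Option ℤ, X i - ψ (X i) ∈ Q) (p : SB k) : p - ψ p ∈ Q := by
  induction p using MvPolynomial.induction_on with
  | C a => simp
  | add p q hp hq =>
      have : p + q - ψ (p + q) = (p - ψ p) + (q - ψ q) := by rw [map_add]; ring
      rw [this]; exact Q.add_mem hp hq
  | mul_X p i hp =>
      have : p * X i - ψ (p * X i) = (p - ψ p) * X i + ψ p * (X i - ψ (X i)) := by
        rw [map_mul]; ring
      rw [this]; exact Q.add_mem (Q.mul_mem_right _ hp) (Q.mul_mem_left _ (h i))

/-- `ψ ε := iota ∘ phi ε`. -/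
def psi (ε : ℤ → k) : SB k →ₐ[k] SB k := (iota k).comp (phi k ε)

lemma psi_X_none (ε : ℤ → k) : psi k ε (X none) = X none := by
  simp [psi, phi, iota]

lemma psi_X_some (ε : ℤ → k) (n : ℤ) :
    psi k ε (X (some n)) = C (ε n) * (X none + (n : SB k)) := by
  simp [psi, phi, iota, Polynomial.aeval_C, map_intCast]

lemma ker_phi_le (ε : ℤ → k) (Q : Ideal (SB k))
    (hQ : ∀ n : ℤ, bP k n - C (ε n) * (zP k + (n : SB k)) ∈ Q) :
    RingHom.ker (phi k ε) ≤ Q := by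
  intro p hp
  have hp0 : phi k ε p = 0 := hp
  have hpsi : psi k ε p = 0 := by simp [psi, hp0, map_zero]
  have := sub_psi_mem k (psi k ε) Q (fun i => by
    match i with
    | none => rw [psi_X_none]; simpa using Q.zero_mem
    | some n =>
        rw [psi_X_some]
        exact hQ n) p
  rwa [hpsi, sub_zero] at this

variable [CharZero k]

lemma eps_sq {ε : ℤ → k} (hε : ∀ n, ε n ^ 2 = 1) (n : ℤ) : ε n ≠ 0 := by
  intro h; have := hε n; rw [h] at this; simp at this

lemma relB_le_ker (ε : ℤ → k) (hε : ∀ n, ε n ^ 2 = 1) :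
    relB k ≤ RingHom.ker (phi k ε) := by
  rw [relB, Ideal.span_le]
  rintro _ ⟨n, rfl⟩
  have : phi k ε (bP k n ^ 2 - (zP k + (n : SB k)) ^ 2) = 0 := by
    rw [map_sub, map_pow, map_pow, map_add, phi_b, phi_z, map_intCast]
    rw [mul_pow, ← Polynomial.C_pow, hε n, Polynomial.C_1]
    ring
  exact this

lemma ker_mem_minimalPrimes (ε : ℤ → k) (hε : ∀ n, ε n ^ 2 = 1) :
    RingHom.ker (phi k ε) ∈ (relB k).minimalPrimes := by
  constructor
  · exact ⟨RingHom.ker_isPrime _, relB_le_ker k ε hε⟩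
  · rintro Q ⟨hQprime, hQrel⟩ hQle
    refine ker_phi_le k ε Q ?_
    intro n
    have hfact : (bP k n - C (ε n) * (zP k + (n : SB k))) *
        (bP k n + C (ε n) * (zP k + (n : SB k))) ∈ Q := by
      have heq : (bP k n - C (ε n) * (zP k + (n : SB k))) *
          (bP k n + C (ε n) * (zP k + (n : SB k)))
          = bP k n ^ 2 - (zP k + (n : SB k)) ^ 2 := by
        have hC : (C (ε n) : SB k) ^ 2 = 1 := by
          rw [← map_pow, hε n, map_one]
        linear_combination (-(zP k + (n : SB k)) ^ 2) * hC
      rw [heq]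
      exact hQrel (Ideal.subset_span ⟨n, rfl⟩)
    rcases hQprime.mem_or_mem hfact with h | h
    · exact h
    · exfalso
      have hk : bP k n + C (ε n) * (zP k + (n : SB k)) ∈ RingHom.ker (phi k ε) := hQle h
      rw [RingHom.mem_ker, map_add, phi_b, map_mul, map_add, phi_z, algHom_C, map_intCast,
        Polynomial.algebraMap_eq, ← Polynomial.C_eq_intCast] at hk
      have hk2 : Polynomial.C (2 * ε n) * (Polynomial.X + Polynomial.C (n : k)) = 0 := by
        rw [show (2 * ε n : k) = ε n + ε n from by ring, Polynomial.C_add, ← hk]; ring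
      rcases mul_eq_zero.mp hk2 with h0 | h0
      · rw [Polynomial.C_eq_zero] at h0
        exact mul_ne_zero two_ne_zero (eps_sq k hε n) h0
      · exact Polynomial.X_add_C_ne_zero _ h0

/-- The sign function that is `-1` at `m` and `1` elsewhere. -/
def epsm (m : ℤ) : ℤ → k := fun n => if n = m then -1 else 1

lemma epsm_sq (m n : ℤ) : epsm k m n ^ 2 = 1 := by
  unfold epsm; split <;> ring

lemma ker_injective : Function.Injective (fun m : ℤ => RingHom.ker (phi k (epsm k m))) := by
  intro m m' h
  by_contra hne
  have hmem : bP k m + zP k + (m : SB k) ∈ RingHom.ker (phi k (epsm k m)) := by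
    rw [RingHom.mem_ker, map_add, map_add, phi_b, phi_z, map_intCast]
    have he : epsm k m m = -1 := by simp [epsm]
    rw [he, map_neg, map_one]
    ring
  simp only at h
  rw [h] at hmem
  rw [RingHom.mem_ker, map_add, map_add, phi_b, phi_z, map_intCast] at hmem
  have he : epsm k m' m = 1 := by simp [epsm, hne]
  rw [he, map_one, one_mul, ← Polynomial.C_eq_intCast] at hmem
  have hmem2 : Polynomial.C (2 : k) * (Polynomial.X + Polynomial.C (m : k)) = 0 := by
    rw [show (2 : k) = 1 + 1 from by ring, Polynomial.C_add, Polynomial.C_1, ← hmem]; ring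
  rcases mul_eq_zero.mp hmem2 with h0 | h0
  · rw [Polynomial.C_eq_zero] at h0
    exact two_ne_zero h0
  · exact Polynomial.X_add_C_ne_zero _ h0

end Stmt7Aux

/-- the ring `B` has infinitely many minimal prime ideals. -/
theorem stmt7 (k : Type) [Field k] [IsAlgClosed k] [CharZero k] :
    (minimalPrimes (B k)).Infinite := by
  have h1 : ((relB k).minimalPrimes).Infinite := by
    apply Set.infinite_of_injective_forall_mem (Stmt7Aux.ker_injective k)
    intro m
    exact Stmt7Aux.ker_mem_minimalPrimes k (Stmt7Aux.epsm k m) (Stmt7Aux.epsm_sq k m)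
  rw [Ideal.minimalPrimes_eq_comap] at h1
  exact Set.Infinite.of_image _ h1
end
end

section
/- Let Γ be an abelian group, S a G-graded k-algebra, and for each γ ∈ Γ let F_γ be an autoequivalence of gr-(S,G) with chosen G-graded S-module isomorphisms Θ_{γ,δ} : F_γ F_δ S → F_{γ+δ} S satisfying the coherence condition Θ_{ε,γ+δ} ∘ F_ε(Θ_{δ,γ}) ∘ F_ε F_δ(φ) = Θ_{δ+ε,γ} ∘ F_{δ+ε}(φ) ∘ Θ_{ε,δ} for all γ,δ,ε ∈ Γ and all φ ∈ Hom_{gr-(S,G)}(S, F_γ S). Then R = ⊕_{γ∈Γ} Hom_{gr-(S,G)}(S, F_γ S), with multiplication φ·ψ = Θ_{δ,γ} ∘ F_δ(φ) ∘ ψ for φ of degree γ and ψ of degree δ, is an associative Γ-graded ring. -/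
open CategoryTheory

/-- given autoequivalences `F γ` (for `γ` in an abelian group `Γ`) of a
category of graded modules (modelled here by an arbitrary `k`-linear-like category `C`),
an object `S`, and isomorphisms `Θ γ δ : F γ (F δ S) ≅ F (γ+δ) S` satisfying the coherence
condition (⋆) of the paper, the multiplication `φ · ψ := ψ ≫ F δ (φ) ≫ Θ δ γ`
(for `φ : S ⟶ F γ S` of degree `γ` and `ψ : S ⟶ F δ S` of degree `δ`) on
`R = ⊕_{γ ∈ Γ} Hom(S, F γ S)` is associative, i.e. `R` is an associative `Γ`-graded ring.
The `eqToHom`s transport along the equality `ε + (δ + γ) = (ε + δ) + γ` of degrees. -/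
theorem stmt13 {C : Type*} [Category C] {Γ : Type*} [AddCommGroup Γ]
    (S : C) (F : Γ → C ⥤ C) (hequiv : ∀ γ : Γ, (F γ).IsEquivalence)
    (Θ : ∀ γ δ : Γ, (F γ).obj ((F δ).obj S) ≅ (F (γ + δ)).obj S)
    (hcond : ∀ (γ δ ε : Γ) (φ : S ⟶ (F γ).obj S),
      (F ε).map ((F δ).map φ) ≫ (F ε).map (Θ δ γ).hom ≫ (Θ ε (δ + γ)).hom ≫
          eqToHom (congrArg (fun g => (F g).obj S) (add_assoc ε δ γ).symm) =
        (Θ ε δ).hom ≫ (F (ε + δ)).map φ ≫ (Θ (ε + δ) γ).hom) :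
    ∀ (γ δ ε : Γ) (φ : S ⟶ (F γ).obj S) (ψ : S ⟶ (F δ).obj S) (ξ : S ⟶ (F ε).obj S),
      -- `(φ · ψ) · ξ`, transported along `ε + (δ + γ) = (ε + δ) + γ` …
      (ξ ≫ (F ε).map (ψ ≫ (F δ).map φ ≫ (Θ δ γ).hom) ≫ (Θ ε (δ + γ)).hom) ≫
          eqToHom (congrArg (fun g => (F g).obj S) (add_assoc ε δ γ).symm) =
      -- … equals `φ · (ψ · ξ)`.
      (ξ ≫ (F ε).map ψ ≫ (Θ ε δ).hom) ≫ (F (ε + δ)).map φ ≫ (Θ (ε + δ) γ).hom := by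
  intro γ δ ε φ ψ ξ
  simp only [Functor.map_comp, Category.assoc, hcond γ δ ε φ]
end

section
/- For the generalized Weyl algebra A = A(z(z+μ)) with μ a positive integer, every finitely generated graded right A-module M has a unique smallest graded submodule κ(M) ⊆ M such that M/κ(M) is finite-dimensional over k. -/
noncomputable section

/-- The generators of the generalized Weyl algebra: `x`, `y`, `z`. -/
def xF (k : Type) [Field k] : FreeAlgebra k (Fin 3) := FreeAlgebra.ι k 0
def yF (k : Type) [Field k] : FreeAlgebra k (Fin 3) := FreeAlgebra.ι k 1
def zF (k : Type) [Field k] : FreeAlgebra k (Fin 3) := FreeAlgebra.ι k 2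

/-- The defining relations of the generalized Weyl algebra `A(f)` with `f = z(z+μ)`,
base ring `k[z]` and automorphism `σ(z) = z + 1`:
`xz = (z+1)x`, `yz = (z-1)y`, `xy = f(z) = z(z+μ)`, `yx = f(z-1) = (z-1)(z-1+μ)`. -/
inductive gwaRel (k : Type) [Field k] (μ : ℕ) :
    FreeAlgebra k (Fin 3) → FreeAlgebra k (Fin 3) → Prop
  | xz : gwaRel k μ (xF k * zF k) ((zF k + 1) * xF k)
  | yz : gwaRel k μ (yF k * zF k) ((zF k - 1) * yF k)
  | xy : gwaRel k μ (xF k * yF k) (zF k * (zF k + (μ : FreeAlgebra k (Fin 3))))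
  | yx : gwaRel k μ (yF k * xF k) ((zF k - 1) * (zF k - 1 + (μ : FreeAlgebra k (Fin 3))))

/-- The generalized Weyl algebra `A = A(z(z+μ))`. -/
abbrev GWA (k : Type) [Field k] (μ : ℕ) := RingQuot (gwaRel k μ)

/-- The images of the generators in `A`. -/
def xA (k : Type) [Field k] (μ : ℕ) : GWA k μ := RingQuot.mkAlgHom k (gwaRel k μ) (xF k)
def yA (k : Type) [Field k] (μ : ℕ) : GWA k μ := RingQuot.mkAlgHom k (gwaRel k μ) (yF k)
def zA (k : Type) [Field k] (μ : ℕ) : GWA k μ := RingQuot.mkAlgHom k (gwaRel k μ) (zF k)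

namespace Stmt15Aux

open Polynomial MulOpposite

variable (k : Type) [Field k] (μ : ℕ)

/-- Evaluation of polynomials at `z`. -/
def ζ : Polynomial k →ₐ[k] GWA k μ := Polynomial.aeval (zA k μ)

lemma rel_xz : xA k μ * zA k μ = (zA k μ + 1) * xA k μ := by
  have := RingQuot.mkAlgHom_rel k (gwaRel.xz (k := k) (μ := μ))
  simpa [xA, zA, map_mul, map_add, map_one] using this

lemma rel_yz : yA k μ * zA k μ = (zA k μ - 1) * yA k μ := by
  have := RingQuot.mkAlgHom_rel k (gwaRel.yz (k := k) (μ := μ))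
  simpa [yA, zA, map_mul, map_sub, map_one] using this

lemma rel_xy : xA k μ * yA k μ = zA k μ * (zA k μ + (μ : GWA k μ)) := by
  have := RingQuot.mkAlgHom_rel k (gwaRel.xy (k := k) (μ := μ))
  simpa [xA, yA, zA, map_mul, map_add, map_natCast] using this

lemma rel_yx : yA k μ * xA k μ = (zA k μ - 1) * (zA k μ - 1 + (μ : GWA k μ)) := by
  have := RingQuot.mkAlgHom_rel k (gwaRel.yx (k := k) (μ := μ))
  simpa [xA, yA, zA, map_mul, map_add, map_sub, map_one, map_natCast] using this

lemma rel_zx : zA k μ * xA k μ = xA k μ * (zA k μ - 1) := by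
  have h := rel_xz k μ
  rw [add_mul, one_mul] at h
  rw [mul_sub, mul_one, h]
  abel

lemma rel_zy : zA k μ * yA k μ = yA k μ * (zA k μ + 1) := by
  have h := rel_yz k μ
  rw [sub_mul, one_mul] at h
  rw [mul_add, mul_one, h]
  abel


section Comm

lemma com_gen (u w : GWA k μ) (h : u * zA k μ = w * u) (f : Polynomial k) :
    u * Polynomial.aeval (zA k μ) f = Polynomial.aeval w f * u := by
  have hpow : ∀ n : ℕ, u * zA k μ ^ n = w ^ n * u := by
    intro n
    induction n with
    | zero => simp
    | succ n ih =>
      rw [pow_succ, ← mul_assoc, ih, mul_assoc, h, pow_succ, mul_assoc]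
  induction f using Polynomial.induction_on' with
  | add p q hp hq => rw [map_add, map_add, mul_add, add_mul, hp, hq]
  | monomial n a =>
    rw [Polynomial.aeval_monomial, Polynomial.aeval_monomial, ← mul_assoc,
      ← Algebra.commutes a u, mul_assoc, hpow, ← mul_assoc]

lemma com_gen' (u w : GWA k μ) (h : zA k μ * u = u * w) (f : Polynomial k) :
    Polynomial.aeval (zA k μ) f * u = u * Polynomial.aeval w f := by
  have hpow : ∀ n : ℕ, zA k μ ^ n * u = u * w ^ n := by
    intro n
    induction n with
    | zero => simp
    | succ n ih =>
      rw [pow_succ, mul_assoc, h, ← mul_assoc, ih, pow_succ, mul_assoc]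
  induction f using Polynomial.induction_on' with
  | add p q hp hq => rw [map_add, map_add, mul_add, add_mul, hp, hq]
  | monomial n a =>
    rw [Polynomial.aeval_monomial, Polynomial.aeval_monomial, mul_assoc, hpow,
      ← mul_assoc, Algebra.commutes a u, mul_assoc]

lemma x_mul_zeta (f : Polynomial k) :
    xA k μ * ζ k μ f = ζ k μ (f.comp (Polynomial.X + Polynomial.C 1)) * xA k μ := by
  have h := com_gen k μ (xA k μ) (zA k μ + 1) (rel_xz k μ) f
  simp only [ζ, Polynomial.aeval_comp, map_add, Polynomial.aeval_X, Polynomial.aeval_C, map_one]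
  exact h

lemma zeta_mul_x (f : Polynomial k) :
    ζ k μ f * xA k μ = xA k μ * ζ k μ (f.comp (Polynomial.X - Polynomial.C 1)) := by
  have h := com_gen' k μ (xA k μ) (zA k μ - 1) (rel_zx k μ) f
  simp only [ζ, Polynomial.aeval_comp, map_sub, Polynomial.aeval_X, Polynomial.aeval_C, map_one]
  exact h

lemma y_mul_zeta (f : Polynomial k) :
    yA k μ * ζ k μ f = ζ k μ (f.comp (Polynomial.X - Polynomial.C 1)) * yA k μ := by
  have h := com_gen k μ (yA k μ) (zA k μ - 1) (rel_yz k μ) f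
  simp only [ζ, Polynomial.aeval_comp, map_sub, Polynomial.aeval_X, Polynomial.aeval_C, map_one]
  exact h

lemma zeta_mul_y (f : Polynomial k) :
    ζ k μ f * yA k μ = yA k μ * ζ k μ (f.comp (Polynomial.X + Polynomial.C 1)) := by
  have h := com_gen' k μ (yA k μ) (zA k μ + 1) (rel_zy k μ) f
  simp only [ζ, Polynomial.aeval_comp, map_add, Polynomial.aeval_X, Polynomial.aeval_C, map_one]
  exact h

lemma zeta_mul_xpow (n : ℕ) (f : Polynomial k) :
    ζ k μ f * xA k μ ^ n
      = xA k μ ^ n * ζ k μ (f.comp (Polynomial.X - Polynomial.C (n : k))) := by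
  induction n generalizing f with
  | zero => simp
  | succ n ih =>
    have hc : ((Polynomial.X : Polynomial k) - Polynomial.C 1).comp
          (Polynomial.X - Polynomial.C (n : k))
        = Polynomial.X - Polynomial.C ((n + 1 : ℕ) : k) := by
      rw [Polynomial.sub_comp, Polynomial.X_comp, Polynomial.C_comp]
      rw [Nat.cast_add, Nat.cast_one, map_add]; ring
    rw [pow_succ', ← mul_assoc, zeta_mul_x, mul_assoc, ih, ← mul_assoc, ← pow_succ',
      Polynomial.comp_assoc, hc]

lemma zeta_mul_ypow (n : ℕ) (f : Polynomial k) :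
    ζ k μ f * yA k μ ^ n
      = yA k μ ^ n * ζ k μ (f.comp (Polynomial.X + Polynomial.C (n : k))) := by
  induction n generalizing f with
  | zero => simp
  | succ n ih =>
    have hc : ((Polynomial.X : Polynomial k) + Polynomial.C 1).comp
          (Polynomial.X + Polynomial.C (n : k))
        = Polynomial.X + Polynomial.C ((n + 1 : ℕ) : k) := by
      rw [Polynomial.add_comp, Polynomial.X_comp, Polynomial.C_comp]
      rw [Nat.cast_add, Nat.cast_one, map_add]; ring
    rw [pow_succ', ← mul_assoc, zeta_mul_y, mul_assoc, ih, ← mul_assoc, ← pow_succ',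
      Polynomial.comp_assoc, hc]

lemma xpow_mul_zeta (n : ℕ) (f : Polynomial k) :
    xA k μ ^ n * ζ k μ f
      = ζ k μ (f.comp (Polynomial.X + Polynomial.C (n : k))) * xA k μ ^ n := by
  induction n generalizing f with
  | zero => simp
  | succ n ih =>
    have hc : ((Polynomial.X : Polynomial k) + Polynomial.C 1).comp
          (Polynomial.X + Polynomial.C (n : k))
        = Polynomial.X + Polynomial.C ((n + 1 : ℕ) : k) := by
      rw [Polynomial.add_comp, Polynomial.X_comp, Polynomial.C_comp]
      rw [Nat.cast_add, Nat.cast_one, map_add]; ring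
    rw [pow_succ, mul_assoc, x_mul_zeta, ← mul_assoc, ih, mul_assoc, ← pow_succ,
      Polynomial.comp_assoc, hc]

end Comm

section Products

/-- `j`-th factor of `pP`: roots `-j` and `-j-μ`. -/
def gP (j : ℕ) : Polynomial k :=
  (X - C (-(j : k))) * (X - C (-(j : k) - (μ : k)))

/-- `j`-th factor of `qP`: roots `j+1` and `j+1-μ`. -/
def hP (j : ℕ) : Polynomial k :=
  (X - C ((j : k) + 1)) * (X - C ((j : k) + 1 - (μ : k)))

def pP (K : ℕ) : Polynomial k := ∏ j ∈ Finset.range K, gP k μ j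

def qP (K : ℕ) : Polynomial k := ∏ j ∈ Finset.range K, hP k μ j

lemma gP_comp (j : ℕ) : (gP k μ j).comp (X + C 1) = gP k μ (j + 1) := by
  simp only [gP, Polynomial.mul_comp, Polynomial.sub_comp, Polynomial.X_comp,
    Polynomial.C_comp]
  rw [Nat.cast_add, Nat.cast_one]
  simp only [map_neg, map_add, map_sub, map_one]
  ring

lemma hP_comp (j : ℕ) : (hP k μ j).comp (X - C 1) = hP k μ (j + 1) := by
  simp only [hP, Polynomial.mul_comp, Polynomial.sub_comp, Polynomial.X_comp,
    Polynomial.C_comp]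
  rw [Nat.cast_add, Nat.cast_one]
  simp only [map_neg, map_add, map_sub, map_one]
  ring

lemma zeta_gP0 : ζ k μ (gP k μ 0) = xA k μ * yA k μ := by
  rw [rel_xy]
  simp only [ζ, gP, Nat.cast_zero, neg_zero, zero_sub, map_mul, map_sub, Polynomial.aeval_X,
    Polynomial.aeval_C, map_zero, map_neg, map_natCast, sub_zero, sub_neg_eq_add]
  simp

lemma zeta_hP0 : ζ k μ (hP k μ 0) = yA k μ * xA k μ := by
  rw [rel_yx]
  simp only [ζ, hP, Nat.cast_zero, zero_add, map_mul, map_sub, Polynomial.aeval_X,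
    Polynomial.aeval_C, map_one, map_natCast]
  congr 1
  abel

lemma xpow_mul_ypow (K : ℕ) : xA k μ ^ K * yA k μ ^ K = ζ k μ (pP k μ K) := by
  induction K with
  | zero => simp [pP]
  | succ K ih =>
    have hcomp : (pP k μ K).comp (X + C 1) = ∏ j ∈ Finset.range K, gP k μ (j + 1) := by
      rw [pP, Polynomial.prod_comp]
      exact Finset.prod_congr rfl fun j _ => gP_comp k μ j
    have hsucc : pP k μ (K + 1) = gP k μ 0 * (pP k μ K).comp (X + C 1) := by
      rw [pP, Finset.prod_range_succ', hcomp, mul_comm]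
    rw [pow_succ', pow_succ, mul_assoc, ← mul_assoc (xA k μ ^ K), ih, ← mul_assoc,
      mul_assoc (xA k μ), zeta_mul_y, ← mul_assoc, hsucc, map_mul, zeta_gP0, mul_assoc]

lemma ypow_mul_xpow (K : ℕ) : yA k μ ^ K * xA k μ ^ K = ζ k μ (qP k μ K) := by
  induction K with
  | zero => simp [qP]
  | succ K ih =>
    have hcomp : (qP k μ K).comp (X - C 1) = ∏ j ∈ Finset.range K, hP k μ (j + 1) := by
      rw [qP, Polynomial.prod_comp]
      exact Finset.prod_congr rfl fun j _ => hP_comp k μ j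
    have hsucc : qP k μ (K + 1) = hP k μ 0 * (qP k μ K).comp (X - C 1) := by
      rw [qP, Finset.prod_range_succ', hcomp, mul_comm]
    rw [pow_succ', pow_succ, mul_assoc, ← mul_assoc (yA k μ ^ K), ih, ← mul_assoc,
      mul_assoc (yA k μ), zeta_mul_x, ← mul_assoc, hsucc, map_mul, zeta_hP0, mul_assoc]

end Products

section Coprime

variable [CharZero k]

lemma lin_cop {a b : k} (h : a ≠ b) : IsCoprime ((X : Polynomial k) - C a) (X - C b) :=
  Polynomial.isCoprime_X_sub_C_of_isUnit_sub (isUnit_iff_ne_zero.mpr (sub_ne_zero.mpr h))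

lemma linShift (a b : k) : ((X : Polynomial k) - C a).comp (X - C b) = X - C (a + b) := by
  simp only [Polynomial.sub_comp, Polynomial.X_comp, Polynomial.C_comp, map_add]
  ring

/-- `pP K` is coprime to `qP K` shifted by `-μ` (i.e. composed with `X - μ`). -/
lemma cop_x (K : ℕ) : IsCoprime (pP k μ K) ((qP k μ K).comp (X - C (μ : k))) := by
  rw [pP, qP, Polynomial.prod_comp]
  apply IsCoprime.prod_left
  intro j _
  apply IsCoprime.prod_right
  intro j' _
  rw [gP, hP, Polynomial.mul_comp, linShift, linShift]
  apply IsCoprime.mul_left <;> apply IsCoprime.mul_right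
  · refine lin_cop k ?_
    intro h
    have : ((j + j' + 1 + μ : ℕ) : k) = 0 := by push_cast; linear_combination -h
    exact absurd (Nat.cast_eq_zero.mp this) (by omega)
  · refine lin_cop k ?_
    intro h
    have : ((j + j' + 1 : ℕ) : k) = 0 := by push_cast; linear_combination -h
    exact absurd (Nat.cast_eq_zero.mp this) (by omega)
  · refine lin_cop k ?_
    intro h
    have : ((j + j' + 1 + μ + μ : ℕ) : k) = 0 := by push_cast; linear_combination -h
    exact absurd (Nat.cast_eq_zero.mp this) (by omega)
  · refine lin_cop k ?_
    intro h
    have : ((j + j' + 1 + μ : ℕ) : k) = 0 := by push_cast; linear_combination -h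
    exact absurd (Nat.cast_eq_zero.mp this) (by omega)

/-- `qP K` is coprime to `pP K` shifted by `+μ` (i.e. composed with `X + μ`). -/
lemma cop_y (K : ℕ) : IsCoprime (qP k μ K) ((pP k μ K).comp (X + C (μ : k))) := by
  have hshift : ∀ a : k, ((X : Polynomial k) - C a).comp (X + C (μ : k)) = X - C (a - μ) := by
    intro a
    simp only [Polynomial.sub_comp, Polynomial.add_comp, Polynomial.X_comp, Polynomial.C_comp,
      map_sub]
    ring
  rw [pP, qP, Polynomial.prod_comp]
  apply IsCoprime.prod_left
  intro j _
  apply IsCoprime.prod_right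
  intro j' _
  rw [hP, gP, Polynomial.mul_comp, hshift, hshift]
  apply IsCoprime.mul_left <;> apply IsCoprime.mul_right
  · refine lin_cop k ?_
    intro h
    have : ((j + j' + 1 + μ : ℕ) : k) = 0 := by push_cast; linear_combination h
    exact absurd (Nat.cast_eq_zero.mp this) (by omega)
  · refine lin_cop k ?_
    intro h
    have : ((j + j' + 1 + μ + μ : ℕ) : k) = 0 := by push_cast; linear_combination h
    exact absurd (Nat.cast_eq_zero.mp this) (by omega)
  · refine lin_cop k ?_
    intro h
    have : ((j + j' + 1 : ℕ) : k) = 0 := by push_cast; linear_combination h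
    exact absurd (Nat.cast_eq_zero.mp this) (by omega)
  · refine lin_cop k ?_
    intro h
    have : ((j + j' + 1 + μ : ℕ) : k) = 0 := by push_cast; linear_combination h
    exact absurd (Nat.cast_eq_zero.mp this) (by omega)

end Coprime

section Act

variable (V : Type) [AddCommGroup V] [Module (GWA k μ)ᵐᵒᵖ V] [Module k V]
  [IsScalarTower k (GWA k μ)ᵐᵒᵖ V]

/-- Right action of `a ∈ A` on a right module as a `k`-linear endomorphism. -/
def act (a : GWA k μ) : Module.End k V where
  toFun v := MulOpposite.op a • v
  map_add' v w := smul_add _ v w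
  map_smul' c v := smul_comm (MulOpposite.op a) c v

@[simp] lemma act_apply (a : GWA k μ) (v : V) : act k μ V a v = MulOpposite.op a • v := rfl

lemma act_mul (a b : GWA k μ) : act k μ V (a * b) = act k μ V b * act k μ V a := by
  ext v
  simp [act, MulOpposite.op_mul, mul_smul]

lemma act_one : act k μ V 1 = 1 := by
  ext v; simp [act]

lemma act_add (a b : GWA k μ) : act k μ V (a + b) = act k μ V a + act k μ V b := by
  ext v; simp [act, add_smul]

lemma act_pow (a : GWA k μ) (n : ℕ) : act k μ V (a ^ n) = act k μ V a ^ n := by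
  induction n with
  | zero => simpa using act_one k μ V
  | succ n ih => rw [pow_succ, act_mul, ih, ← pow_succ']

/-- The action of polynomials in `z`. -/
def actZ : Polynomial k →ₐ[k] Module.End k V where
  toFun f := act k μ V (ζ k μ f)
  map_one' := by
    show act k μ V (ζ k μ 1) = 1
    rw [map_one, act_one]
  map_mul' f g := by
    show act k μ V (ζ k μ (f * g)) = act k μ V (ζ k μ f) * act k μ V (ζ k μ g)
    rw [mul_comm f g, map_mul, act_mul]
  map_zero' := by
    show act k μ V (ζ k μ 0) = 0
    rw [map_zero]; ext v; simp [act]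
  map_add' f g := by
    show act k μ V (ζ k μ (f + g)) = act k μ V (ζ k μ f) + act k μ V (ζ k μ g)
    rw [map_add, act_add]
  commutes' c := by
    show act k μ V (ζ k μ ((algebraMap k (Polynomial k)) c)) = _
    ext v
    rw [ζ, AlgHom.commutes (Polynomial.aeval (zA k μ)) c]
    rw [act_apply, ← MulOpposite.algebraMap_apply, algebraMap_smul,
      Module.algebraMap_end_apply]

lemma act_zeta (f : Polynomial k) :
    act k μ V (ζ k μ f) = Polynomial.aeval (act k μ V (zA k μ)) f := by
  have h : actZ k μ V = Polynomial.aeval (act k μ V (zA k μ)) := by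
    apply Polynomial.algHom_ext
    show act k μ V (ζ k μ Polynomial.X) = _
    rw [Polynomial.aeval_X]
    congr 1
    simp [ζ]
  exact congrFun (congrArg DFunLike.coe h) f

end Act

section Grading

variable {M : Type} [AddCommGroup M] [Module (GWA k μ)ᵐᵒᵖ M] [Module k M]
  [IsScalarTower k (GWA k μ)ᵐᵒᵖ M]
  (ℳ : ℤ → Submodule k M) [DirectSum.Decomposition ℳ]

/-- k-scalars act through `Aᵐᵒᵖ`, so `Aᵐᵒᵖ`-submodules are closed under k-scalars. -/
lemma smul_mem_of_mem (N : Submodule (GWA k μ)ᵐᵒᵖ M) {m : M} (hm : m ∈ N) (c : k) :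
    c • m ∈ N := by
  rw [← algebraMap_smul ((GWA k μ)ᵐᵒᵖ) c m]
  exact N.smul_mem _ hm

/-- If a graded piece shows up nontrivially mod `N` only finitely often, powers of a
homogeneous element of nonzero degree annihilate `M ⧸ N`. -/
lemma nil_act (𝒜 : ℤ → Submodule k (GWA k μ)) [GradedRing 𝒜]
    (hcompat : ∀ (i j : ℤ), ∀ a ∈ 𝒜 i, ∀ m ∈ ℳ j, (MulOpposite.op a) • m ∈ ℳ (j + i))
    (N : Submodule (GWA k μ)ᵐᵒᵖ M)
    (hNgr : ∀ m ∈ N, ∀ i : ℤ, (DirectSum.decompose ℳ m i : M) ∈ N)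
    (hfd : FiniteDimensional k (M ⧸ N))
    (a : GWA k μ) (d : ℤ) (ha : a ∈ 𝒜 d) (hd : d = 1 ∨ d = -1) :
    ∃ K : ℕ, 0 < K ∧ ∀ m : M, MulOpposite.op (a ^ K) • m ∈ N := by
  classical
  set Supp : Set ℤ := {i | ∃ w ∈ ℳ i, w ∉ N} with hSupp
  -- Step 1: Supp is finite
  have hfin : Supp.Finite := by
    by_contra hinf
    have hinf' : Supp.Infinite := hinf
    obtain ⟨F, hFsub, hFcard⟩ :=
      hinf'.exists_subset_card_eq (Module.finrank k (M ⧸ N) + 1)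
    have hchoice : ∀ i : {x // x ∈ F}, ∃ w : M, w ∈ ℳ (i : ℤ) ∧ w ∉ N := by
      rintro ⟨i, hi⟩
      obtain ⟨w, hw1, hw2⟩ := hFsub hi
      exact ⟨w, hw1, hw2⟩
    choose w hw1 hw2 using hchoice
    have hli : LinearIndependent k fun i : {x // x ∈ F} => N.mkQ (w i) := by
      rw [Fintype.linearIndependent_iff]
      intro g hg i₀
      have hmem : (∑ i, g i • w i) ∈ N := by
        rw [← Submodule.Quotient.mk_eq_zero]
        rw [show (Submodule.Quotient.mk (∑ i, g i • w i) : M ⧸ N)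
            = ∑ i, g i • (N.mkQ (w i)) from ?_]
        · exact hg
        · rw [← Submodule.mkQ_apply, map_sum]
          exact Finset.sum_congr rfl fun i _ => by
            rw [Submodule.mkQ_apply, Submodule.Quotient.mk_smul, Submodule.mkQ_apply]
      have hdec := hNgr _ hmem (i₀ : ℤ)
      have heq : (DirectSum.decompose ℳ (∑ i, g i • w i) (i₀ : ℤ) : M) = g i₀ • w i₀ := by
        have : ∀ i : {x // x ∈ F},
            (DirectSum.decompose ℳ (g i • w i) (i₀ : ℤ) : M)
              = if i = i₀ then g i₀ • w i₀ else 0 := by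
          intro i
          by_cases h : i = i₀
          · subst h
            rw [if_pos rfl, DirectSum.decompose_of_mem_same]
            exact Submodule.smul_mem _ _ (hw1 i)
          · rw [if_neg h, DirectSum.decompose_of_mem_ne (ℳ := ℳ)
              (Submodule.smul_mem _ _ (hw1 i))]
            exact fun hc => h (Subtype.ext hc)
        rw [show (DirectSum.decompose ℳ (∑ i, g i • w i) (i₀ : ℤ) : M)
            = ∑ i, (DirectSum.decompose ℳ (g i • w i) (i₀ : ℤ) : M) from ?_]
        · rw [Finset.sum_congr rfl fun i _ => this i]
          simp
        · rw [DirectSum.decompose_sum, DFinsupp.finset_sum_apply]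
          push_cast
          rfl
      rw [heq] at hdec
      by_contra hgne
      exact hw2 i₀ (by
        have := smul_mem_of_mem k μ N hdec (g i₀)⁻¹
        rwa [← smul_assoc, smul_eq_mul, inv_mul_cancel₀ hgne, one_smul] at this)
    have hcard := hli.fintype_card_le_finrank
    rw [Fintype.card_coe, hFcard] at hcard
    omega
  -- Step 2
  by_cases hne : (hfin.toFinset).Nonempty
  · set lo := hfin.toFinset.min' hne
    set hi := hfin.toFinset.max' hne
    refine ⟨(hi - lo).toNat + 1, Nat.succ_pos _, ?_⟩
    set K := (hi - lo).toNat + 1 with hK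
    have hhom : ∀ (j : ℤ), ∀ w ∈ ℳ j, MulOpposite.op (a ^ K) • w ∈ N := by
      intro j w hw
      by_cases hwN : w ∈ N
      · exact N.smul_mem _ hwN
      · have hj : j ∈ hfin.toFinset := by
          rw [Set.Finite.mem_toFinset]; exact ⟨w, hw, hwN⟩
        have hjlo : lo ≤ j := Finset.min'_le _ _ hj
        have hjhi : j ≤ hi := Finset.le_max' _ _ hj
        have hmem2 : MulOpposite.op (a ^ K) • w ∈ ℳ (j + K • d) :=
          hcompat _ _ _ (SetLike.pow_mem_graded K ha) _ hw
        have hout : (j + K • d) ∉ Supp := by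
          have hlohi : lo ≤ hi := le_trans hjlo hjhi
          intro hcon
          have : j + K • d ∈ hfin.toFinset := by rw [Set.Finite.mem_toFinset]; exact hcon
          have h1 : lo ≤ j + K • d := Finset.min'_le _ _ this
          have h2 : j + K • d ≤ hi := Finset.le_max' _ _ this
          rcases hd with rfl | rfl
          · rw [nsmul_eq_mul, mul_one] at h1 h2
            omega
          · rw [nsmul_eq_mul, mul_neg_one] at h1 h2
            omega
        have : ∀ w' ∈ ℳ (j + K • d), w' ∈ N := by
          intro w' hw'
          by_contra hcon
          exact hout ⟨w', hw', hcon⟩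
        exact this _ hmem2
    intro m
    induction m using DirectSum.Decomposition.inductionOn ℳ with
    | zero => simpa using N.zero_mem
    | @homogeneous j w => exact hhom j w w.2
    | add m m' hm hm' => rw [smul_add]; exact N.add_mem hm hm'
  · -- Supp empty : N = ⊤
    refine ⟨1, Nat.one_pos, ?_⟩
    have hall : ∀ m : M, m ∈ N := by
      intro m
      induction m using DirectSum.Decomposition.inductionOn ℳ with
      | zero => exact N.zero_mem
      | @homogeneous j w =>
        by_contra hcon
        exact hne ⟨j, Set.Finite.mem_toFinset hfin |>.mpr ⟨w, w.2, hcon⟩⟩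
      | add m m' hm hm' => exact N.add_mem hm hm'
    intro m
    exact N.smul_mem _ (hall m)

end Grading

section AnnMu

variable {M : Type} [AddCommGroup M] [Module (GWA k μ)ᵐᵒᵖ M] [Module k M]
  [IsScalarTower k (GWA k μ)ᵐᵒᵖ M]
  (ℳ : ℤ → Submodule k M) [DirectSum.Decomposition ℳ]

lemma act_pow_mkQ_zero {N : Submodule (GWA k μ)ᵐᵒᵖ M} {a : GWA k μ} {n : ℕ}
    (h : act k μ (M ⧸ N) a ^ n = 0) (m : M) : MulOpposite.op (a ^ n) • m ∈ N := by
  have h2 := congrFun (congrArg DFunLike.coe h) (N.mkQ m)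
  rw [← act_pow] at h2
  have h3 : act k μ (M ⧸ N) (a ^ n) (N.mkQ m) = N.mkQ (MulOpposite.op (a ^ n) • m) := by
    rw [act_apply, ← map_smul]
  rw [h3] at h2
  rw [← Submodule.Quotient.mk_eq_zero]
  exact h2

set_option maxHeartbeats 2000000 in
lemma ann_mu [CharZero k]
    (𝒜 : ℤ → Submodule k (GWA k μ)) [GradedRing 𝒜]
    (hx : xA k μ ∈ 𝒜 1) (hy : yA k μ ∈ 𝒜 (-1))
    (hcompat : ∀ (i j : ℤ), ∀ a ∈ 𝒜 i, ∀ m ∈ ℳ j, (MulOpposite.op a) • m ∈ ℳ (j + i))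
    (N : Submodule (GWA k μ)ᵐᵒᵖ M)
    (hNgr : ∀ m ∈ N, ∀ i : ℤ, (DirectSum.decompose ℳ m i : M) ∈ N)
    (hfd : FiniteDimensional k (M ⧸ N)) :
    (∀ m : M, MulOpposite.op (xA k μ ^ μ) • m ∈ N) ∧
      (∀ m : M, MulOpposite.op (yA k μ ^ μ) • m ∈ N) := by
  classical
  obtain ⟨K1, hK1, hX1⟩ := nil_act k μ ℳ 𝒜 hcompat N hNgr hfd (xA k μ) 1 hx (Or.inl rfl)
  obtain ⟨K2, hK2, hY1⟩ := nil_act k μ ℳ 𝒜 hcompat N hNgr hfd (yA k μ) (-1) hy (Or.inr rfl)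
  set K := max K1 K2 with hK
  have hXK : ∀ m : M, MulOpposite.op (xA k μ ^ K) • m ∈ N := by
    intro m
    have hsplit : xA k μ ^ K = xA k μ ^ K1 * xA k μ ^ (K - K1) := by
      rw [← pow_add]; congr 1; omega
    rw [hsplit, MulOpposite.op_mul, mul_smul]
    exact N.smul_mem _ (hX1 m)
  have hYK : ∀ m : M, MulOpposite.op (yA k μ ^ K) • m ∈ N := by
    intro m
    have hsplit : yA k μ ^ K = yA k μ ^ K2 * yA k μ ^ (K - K2) := by
      rw [← pow_add]; congr 1; omega
    rw [hsplit, MulOpposite.op_mul, mul_smul]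
    exact N.smul_mem _ (hY1 m)
  have hXop : act k μ (M ⧸ N) (xA k μ) ^ K = 0 := by
    ext v
    obtain ⟨m, rfl⟩ := N.mkQ_surjective v
    rw [← act_pow, act_apply, ← map_smul, LinearMap.zero_apply, Submodule.mkQ_apply,
      Submodule.Quotient.mk_eq_zero]
    exact hXK m
  have hYop : act k μ (M ⧸ N) (yA k μ) ^ K = 0 := by
    ext v
    obtain ⟨m, rfl⟩ := N.mkQ_surjective v
    rw [← act_pow, act_apply, ← map_smul, LinearMap.zero_apply, Submodule.mkQ_apply,
      Submodule.Quotient.mk_eq_zero]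
    exact hYK m
  set Z := act k μ (M ⧸ N) (zA k μ) with hZ
  have hp0 : Polynomial.aeval Z (pP k μ K) = 0 := by
    rw [← act_zeta, ← xpow_mul_ypow, act_mul, act_pow, act_pow, hXop, mul_zero]
  have hq0 : Polynomial.aeval Z (qP k μ K) = 0 := by
    rw [← act_zeta, ← ypow_mul_xpow, act_mul, act_pow, act_pow, hYop, mul_zero]
  set s := EuclideanDomain.gcd (pP k μ K) (qP k μ K) with hs
  have hs0 : Polynomial.aeval Z s = 0 := by
    rw [hs, EuclideanDomain.gcd_eq_gcd_ab, map_add, map_mul, map_mul, hp0, hq0,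
      zero_mul, zero_mul, add_zero]
  have hdvd1 : s ∣ pP k μ K := EuclideanDomain.gcd_dvd_left _ _
  have hdvd2 : s ∣ qP k μ K := EuclideanDomain.gcd_dvd_right _ _
  constructor
  · -- x side
    have hcopX : IsCoprime s (s.comp (X - C (μ : k))) := by
      have h2 : s.comp (X - C (μ : k)) ∣ (qP k μ K).comp (X - C (μ : k)) := by
        rw [Polynomial.comp_eq_aeval, Polynomial.comp_eq_aeval]
        obtain ⟨c, hc⟩ := hdvd2
        exact ⟨Polynomial.aeval (X - C (μ : k)) c, by rw [hc, map_mul]⟩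
      exact ((cop_x k μ K).of_isCoprime_of_dvd_left hdvd1).of_isCoprime_of_dvd_right h2
    obtain ⟨c1, c2, hc⟩ := hcopX
    have hinv : Polynomial.aeval Z c2 * Polynomial.aeval Z (s.comp (X - C (μ : k))) = 1 := by
      have h4 := congrArg (Polynomial.aeval Z) hc
      rwa [map_add, map_mul, map_mul, hs0, mul_zero, zero_add, map_one] at h4
    have hzero : Polynomial.aeval Z (s.comp (X - C (μ : k))) * act k μ (M ⧸ N) (xA k μ) ^ μ
        = 0 := by
      have h5 := congrArg (act k μ (M ⧸ N)) (zeta_mul_xpow k μ μ s)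
      rw [act_mul, act_mul, act_pow, act_zeta, act_zeta, hs0, mul_zero] at h5
      exact h5.symm
    have hXmu : act k μ (M ⧸ N) (xA k μ) ^ μ = 0 := by
      calc act k μ (M ⧸ N) (xA k μ) ^ μ
          = (Polynomial.aeval Z c2 * Polynomial.aeval Z (s.comp (X - C (μ : k))))
            * act k μ (M ⧸ N) (xA k μ) ^ μ := by rw [hinv, one_mul]
        _ = Polynomial.aeval Z c2 * (Polynomial.aeval Z (s.comp (X - C (μ : k)))
            * act k μ (M ⧸ N) (xA k μ) ^ μ) := by rw [mul_assoc]
        _ = 0 := by rw [hzero, mul_zero]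
    exact act_pow_mkQ_zero k μ hXmu
  · -- y side
    have hcopY : IsCoprime s (s.comp (X + C (μ : k))) := by
      have h2 : s.comp (X + C (μ : k)) ∣ (pP k μ K).comp (X + C (μ : k)) := by
        rw [Polynomial.comp_eq_aeval, Polynomial.comp_eq_aeval]
        obtain ⟨c, hc⟩ := hdvd1
        exact ⟨Polynomial.aeval (X + C (μ : k)) c, by rw [hc, map_mul]⟩
      exact ((cop_y k μ K).of_isCoprime_of_dvd_left hdvd2).of_isCoprime_of_dvd_right h2
    obtain ⟨c1, c2, hc⟩ := hcopY
    have hinv : Polynomial.aeval Z c2 * Polynomial.aeval Z (s.comp (X + C (μ : k))) = 1 := by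
      have h4 := congrArg (Polynomial.aeval Z) hc
      rwa [map_add, map_mul, map_mul, hs0, mul_zero, zero_add, map_one] at h4
    have hzero : Polynomial.aeval Z (s.comp (X + C (μ : k))) * act k μ (M ⧸ N) (yA k μ) ^ μ
        = 0 := by
      have h5 := congrArg (act k μ (M ⧸ N)) (zeta_mul_ypow k μ μ s)
      rw [act_mul, act_mul, act_pow, act_zeta, act_zeta, hs0, mul_zero] at h5
      exact h5.symm
    have hYmu : act k μ (M ⧸ N) (yA k μ) ^ μ = 0 := by
      calc act k μ (M ⧸ N) (yA k μ) ^ μ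
          = (Polynomial.aeval Z c2 * Polynomial.aeval Z (s.comp (X + C (μ : k))))
            * act k μ (M ⧸ N) (yA k μ) ^ μ := by rw [hinv, one_mul]
        _ = Polynomial.aeval Z c2 * (Polynomial.aeval Z (s.comp (X + C (μ : k)))
            * act k μ (M ⧸ N) (yA k μ) ^ μ) := by rw [mul_assoc]
        _ = 0 := by rw [hzero, mul_zero]
    exact act_pow_mkQ_zero k μ hYmu

end AnnMu

section Span

lemma zeta_X : ζ k μ Polynomial.X = zA k μ := by simp [ζ]

lemma adjoin_xyz : Algebra.adjoin k {xA k μ, yA k μ, zA k μ} = ⊤ := by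
  rw [eq_top_iff]
  intro a _
  obtain ⟨b, rfl⟩ := RingQuot.mkAlgHom_surjective k (gwaRel k μ) a
  have hb : b ∈ Algebra.adjoin k (Set.range (FreeAlgebra.ι k)) := by
    rw [FreeAlgebra.adjoin_range_ι]; trivial
  have h2 : RingQuot.mkAlgHom k (gwaRel k μ) b ∈
      (Algebra.adjoin k (Set.range (FreeAlgebra.ι k))).map (RingQuot.mkAlgHom k (gwaRel k μ)) :=
    ⟨b, hb, rfl⟩
  rw [AlgHom.map_adjoin] at h2
  refine Algebra.adjoin_mono ?_ h2
  rintro w ⟨v, ⟨i, rfl⟩, rfl⟩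
  fin_cases i
  · exact Set.mem_insert _ _
  · exact Set.mem_insert_of_mem _ (Set.mem_insert _ _)
  · exact Set.mem_insert_of_mem _ (Set.mem_insert_of_mem _ rfl)

/-- The finite set of monomials spanning `A` modulo the ideal `(x^μ, y^μ)`. -/
def MonSet : Set (GWA k μ) :=
  (fun t : ℕ × ℕ × ℕ => yA k μ ^ t.1 * ζ k μ (Polynomial.X ^ t.2.1) * xA k μ ^ t.2.2) ''
    {t | t.1 < μ ∧ t.2.1 < 2 * μ ∧ t.2.2 < μ}

lemma MonSet_finite : (MonSet k μ).Finite := by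
  apply Set.Finite.image
  have hsub : {t : ℕ × ℕ × ℕ | t.1 < μ ∧ t.2.1 < 2 * μ ∧ t.2.2 < μ}
      ⊆ {n | n < μ} ×ˢ ({n | n < 2 * μ} ×ˢ {n | n < μ}) := by
    rintro ⟨b, c, a⟩ ⟨h1, h2, h3⟩
    exact ⟨h1, h2, h3⟩
  exact Set.Finite.subset (Set.Finite.prod (Set.finite_lt_nat _)
    (Set.Finite.prod (Set.finite_lt_nat _) (Set.finite_lt_nat _))) hsub

lemma one_mem_MonSet (hμ : 0 < μ) : (1 : GWA k μ) ∈ MonSet k μ := by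
  refine ⟨(0, 0, 0), ⟨hμ, by show 0 < 2 * μ; omega, hμ⟩, ?_⟩
  simp

lemma G_monic : (pP k μ μ).Monic := by
  apply Polynomial.monic_prod_of_monic
  intro j _
  exact (Polynomial.monic_X_sub_C _).mul (Polynomial.monic_X_sub_C _)

lemma G_natDegree : (pP k μ μ).natDegree = 2 * μ := by
  rw [pP, Polynomial.natDegree_prod]
  · rw [Finset.sum_congr rfl fun j _ => ?_, Finset.sum_const, Finset.card_range, smul_eq_mul,
      mul_comm]
    rw [gP, Polynomial.natDegree_mul (Polynomial.X_sub_C_ne_zero _) (Polynomial.X_sub_C_ne_zero _),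
      Polynomial.natDegree_X_sub_C, Polynomial.natDegree_X_sub_C]
  · intro j _
    rw [gP]
    exact mul_ne_zero (Polynomial.X_sub_C_ne_zero _) (Polynomial.X_sub_C_ne_zero _)

lemma span_le_aux (hμ : 0 < μ) (Tsub : Submodule k (GWA k μ))
    (hl : ∀ (b : GWA k μ), ∀ t ∈ Tsub, b * t ∈ Tsub)
    (hr : ∀ t ∈ Tsub, ∀ (b : GWA k μ), t * b ∈ Tsub)
    (hxT : xA k μ ^ μ ∈ Tsub) (hyT : yA k μ ^ μ ∈ Tsub) :
    ∀ a : GWA k μ, a ∈ Submodule.span k (MonSet k μ) ⊔ Tsub := by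
  set F := Submodule.span k (MonSet k μ) ⊔ Tsub with hF
  have hMonF : ∀ b c a : ℕ, b < μ → c < 2 * μ → a < μ →
      yA k μ ^ b * ζ k μ (Polynomial.X ^ c) * xA k μ ^ a ∈ F := by
    intro b c a hb hc ha
    exact Submodule.mem_sup_left (Submodule.subset_span ⟨(b, c, a), ⟨hb, hc, ha⟩, rfl⟩)
  have hTF : ∀ t ∈ Tsub, t ∈ F := fun t ht => Submodule.mem_sup_right ht
  have hζG : ζ k μ (pP k μ μ) ∈ Tsub := by
    rw [← xpow_mul_ypow]
    exact hr _ hxT _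
  -- the key reduction lemma
  have L2 : ∀ (b a : ℕ), b < μ → a < μ → ∀ f : Polynomial k,
      yA k μ ^ b * ζ k μ f * xA k μ ^ a ∈ F := by
    intro b a hb ha f
    have h1 : yA k μ ^ b * ζ k μ f * xA k μ ^ a
        = yA k μ ^ b * ζ k μ (f %ₘ pP k μ μ) * xA k μ ^ a
          + yA k μ ^ b * (ζ k μ (pP k μ μ) * ζ k μ (f /ₘ pP k μ μ)) * xA k μ ^ a := by
      conv_lhs => rw [← Polynomial.modByMonic_add_div f (pP k μ μ)]
      rw [map_add, map_mul, mul_add, add_mul]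
    rw [h1]
    refine F.add_mem ?_ (hTF _ (hr _ (hl _ _ (hr _ hζG _)) _))
    by_cases hr0 : f %ₘ pP k μ μ = 0
    · rw [hr0, map_zero, mul_zero, zero_mul]
      exact F.zero_mem
    · have hdeg : (f %ₘ pP k μ μ).natDegree < 2 * μ := by
        rw [← G_natDegree k μ]
        exact Polynomial.natDegree_lt_natDegree hr0
          (Polynomial.degree_modByMonic_lt f (G_monic k μ))
      rw [Polynomial.as_sum_range' _ _ hdeg, map_sum, Finset.mul_sum, Finset.sum_mul]
      refine Submodule.sum_mem F ?_
      intro c hc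
      have hmon : ζ k μ (Polynomial.monomial c ((f %ₘ pP k μ μ).coeff c))
          = ((f %ₘ pP k μ μ).coeff c) • ζ k μ (Polynomial.X ^ c) := by
        rw [ζ, Polynomial.aeval_monomial, map_pow, Polynomial.aeval_X, ← Algebra.smul_def]
      rw [hmon, mul_smul_comm, smul_mul_assoc]
      exact F.smul_mem _ (hMonF b c a hb (Finset.mem_range.mp hc) ha)
  -- closure under right multiplication by x
  have hclx : ∀ w ∈ F, w * xA k μ ∈ F := by
    intro w hw
    obtain ⟨g, hg, t, ht, rfl⟩ := Submodule.mem_sup.mp hw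
    rw [add_mul]
    refine F.add_mem ?_ (hTF _ (hr _ ht _))
    refine Submodule.span_induction ?_ ?_ ?_ ?_ hg
    · rintro w ⟨⟨b, c, a⟩, ⟨hb, hc, ha⟩, rfl⟩
      replace hb : b < μ := hb
      replace hc : c < 2 * μ := hc
      replace ha : a < μ := ha
      simp only
      rw [mul_assoc, ← pow_succ]
      by_cases haa : a + 1 < μ
      · exact hMonF b c (a + 1) hb hc haa
      · have : a + 1 = μ := by omega
        rw [this]
        exact hTF _ (hl _ _ hxT)
    · rw [zero_mul]; exact F.zero_mem
    · intro u v _ _ hu hv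
      rw [add_mul]; exact F.add_mem hu hv
    · intro c u _ hu
      rw [smul_mul_assoc]; exact F.smul_mem _ hu
  -- closure under right multiplication by z
  have hclz : ∀ w ∈ F, w * zA k μ ∈ F := by
    intro w hw
    obtain ⟨g, hg, t, ht, rfl⟩ := Submodule.mem_sup.mp hw
    rw [add_mul]
    refine F.add_mem ?_ (hTF _ (hr _ ht _))
    refine Submodule.span_induction ?_ ?_ ?_ ?_ hg
    · rintro w ⟨⟨b, c, a⟩, ⟨hb, hc, ha⟩, rfl⟩
      simp only
      replace hb : b < μ := hb
      replace hc : c < 2 * μ := hc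
      replace ha : a < μ := ha
      rw [← zeta_X k μ, mul_assoc, xpow_mul_zeta, ← mul_assoc, mul_assoc (yA k μ ^ b), ← map_mul]
      exact L2 b a hb ha _
    · rw [zero_mul]; exact F.zero_mem
    · intro u v _ _ hu hv
      rw [add_mul]; exact F.add_mem hu hv
    · intro c u _ hu
      rw [smul_mul_assoc]; exact F.smul_mem _ hu
  -- closure under right multiplication by y
  have hcly : ∀ w ∈ F, w * yA k μ ∈ F := by
    intro w hw
    obtain ⟨g, hg, t, ht, rfl⟩ := Submodule.mem_sup.mp hw
    rw [add_mul]
    refine F.add_mem ?_ (hTF _ (hr _ ht _))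
    refine Submodule.span_induction ?_ ?_ ?_ ?_ hg
    · rintro w ⟨⟨b, c, a⟩, ⟨hb, hc, ha⟩, rfl⟩
      replace hb : b < μ := hb
      replace hc : c < 2 * μ := hc
      replace ha : a < μ := ha
      simp only
      match a, ha with
      | 0, ha =>
        rw [pow_zero, mul_one, mul_assoc, zeta_mul_y, ← mul_assoc, ← pow_succ]
        by_cases hbb : b + 1 < μ
        · have := L2 (b + 1) 0 hbb hμ (Polynomial.X ^ c |>.comp (Polynomial.X + Polynomial.C 1))
          rwa [pow_zero, mul_one] at this
        · have hβ : b + 1 = μ := by omega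
          rw [hβ]
          exact hTF _ (hr _ hyT _)
      | a + 1, ha =>
        have hxy : xA k μ ^ (a + 1) * yA k μ
            = ζ k μ ((gP k μ 0).comp (Polynomial.X + Polynomial.C (a : k))) * xA k μ ^ a := by
          rw [pow_succ, mul_assoc, ← zeta_gP0, ← xpow_mul_zeta]
        rw [mul_assoc, hxy, ← mul_assoc, mul_assoc (yA k μ ^ b), ← map_mul]
        exact L2 b a hb (by omega) _
    · rw [zero_mul]; exact F.zero_mem
    · intro u v _ _ hu hv
      rw [add_mul]; exact F.add_mem hu hv
    · intro c u _ hu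
      rw [smul_mul_assoc]; exact F.smul_mem _ hu
  -- conclude via algebra induction
  have hstep : ∀ a : GWA k μ, ∀ w ∈ F, w * a ∈ F := by
    intro a
    have hmem : a ∈ Algebra.adjoin k {xA k μ, yA k μ, zA k μ} := by
      rw [adjoin_xyz]; trivial
    induction hmem using Algebra.adjoin_induction with
    | mem u hu =>
      rcases hu with rfl | rfl | rfl
      · exact hclx
      · exact hcly
      · exact hclz
    | algebraMap r =>
      intro w hw
      rw [← Algebra.commutes r w, ← Algebra.smul_def]
      exact F.smul_mem _ hw
    | add u v _ _ hu hv =>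
      intro w hw
      rw [mul_add]
      exact F.add_mem (hu w hw) (hv w hw)
    | mul u v _ _ hu hv =>
      intro w hw
      rw [← mul_assoc]
      exact hv _ (hu w hw)
  intro a
  have h1F : (1 : GWA k μ) ∈ F :=
    Submodule.mem_sup_left (Submodule.subset_span (one_mem_MonSet k μ hμ))
  have := hstep a 1 h1F
  rwa [one_mul] at this

end Span

section Kappa

variable {M : Type} [AddCommGroup M] [Module (GWA k μ)ᵐᵒᵖ M] [Module k M]
  [IsScalarTower k (GWA k μ)ᵐᵒᵖ M]

/-- `κ(M) = M·(x^μ, y^μ)`. -/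
def kappa : Submodule (GWA k μ)ᵐᵒᵖ M :=
  Submodule.span _ (Set.range (fun m : M => MulOpposite.op (xA k μ ^ μ) • m) ∪
    Set.range (fun m : M => MulOpposite.op (yA k μ ^ μ) • m))

lemma mem_kappa_x (m : M) : MulOpposite.op (xA k μ ^ μ) • m ∈ kappa k μ (M := M) :=
  Submodule.subset_span (Or.inl ⟨m, rfl⟩)

lemma mem_kappa_y (m : M) : MulOpposite.op (yA k μ ^ μ) • m ∈ kappa k μ (M := M) :=
  Submodule.subset_span (Or.inr ⟨m, rfl⟩)

variable (ℳ : ℤ → Submodule k M) [DirectSum.Decomposition ℳ]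

lemma hdec_lemma (𝒜 : ℤ → Submodule k (GWA k μ)) [GradedRing 𝒜]
    (hcompat : ∀ (i j : ℤ), ∀ a ∈ 𝒜 i, ∀ m ∈ ℳ j, (MulOpposite.op a) • m ∈ ℳ (j + i))
    (d : ℤ) (a : GWA k μ) (ha : a ∈ 𝒜 d) (m : M) (i : ℤ) :
    (DirectSum.decompose ℳ (MulOpposite.op a • m) i : M)
      = MulOpposite.op a • (DirectSum.decompose ℳ m (i - d) : M) := by
  induction m using DirectSum.Decomposition.inductionOn ℳ with
  | zero => rw [smul_zero, DirectSum.decompose_zero]; simp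
  | @homogeneous j w =>
    by_cases hij : i = j + d
    · subst hij
      rw [DirectSum.decompose_of_mem_same ℳ (hcompat d j a ha w w.2)]
      have hjj : (j + d) - d = j := by ring
      rw [hjj, DirectSum.decompose_of_mem_same ℳ w.2]
    · rw [DirectSum.decompose_of_mem_ne ℳ (hcompat d j a ha w w.2) (fun h => hij h.symm)]
      have hne : j ≠ i - d := fun h => hij (by omega)
      rw [DirectSum.decompose_of_mem_ne ℳ w.2 hne, smul_zero]
  | add m m' hm hm' =>
    rw [smul_add]
    simp only [DirectSum.decompose_add, DirectSum.add_apply, Submodule.coe_add]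
    rw [hm, hm', smul_add]

lemma hxp (𝒜 : ℤ → Submodule k (GWA k μ)) [GradedRing 𝒜] (hx : xA k μ ∈ 𝒜 1) :
    xA k μ ^ μ ∈ 𝒜 (μ : ℤ) := by
  have := SetLike.pow_mem_graded μ hx
  rwa [nsmul_eq_mul, mul_one] at this

lemma hyp (𝒜 : ℤ → Submodule k (GWA k μ)) [GradedRing 𝒜] (hy : yA k μ ∈ 𝒜 (-1)) :
    yA k μ ^ μ ∈ 𝒜 (-(μ : ℤ)) := by
  have := SetLike.pow_mem_graded μ hy
  rwa [nsmul_eq_mul, mul_neg_one] at this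

lemma kappa_graded (𝒜 : ℤ → Submodule k (GWA k μ)) [GradedRing 𝒜]
    (hx : xA k μ ∈ 𝒜 1) (hy : yA k μ ∈ 𝒜 (-1))
    (hcompat : ∀ (i j : ℤ), ∀ a ∈ 𝒜 i, ∀ m ∈ ℳ j, (MulOpposite.op a) • m ∈ ℳ (j + i)) :
    ∀ m ∈ kappa k μ (M := M), ∀ i : ℤ,
      (DirectSum.decompose ℳ m i : M) ∈ kappa k μ (M := M) := by
  classical
  set P : Submodule (GWA k μ)ᵐᵒᵖ M :=
    { carrier := {m | ∀ i : ℤ, (DirectSum.decompose ℳ m i : M) ∈ kappa k μ (M := M)}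
      add_mem' := by
        intro u v hu hv i
        simp only [DirectSum.decompose_add, DirectSum.add_apply, Submodule.coe_add]
        exact Submodule.add_mem _ (hu i) (hv i)
      zero_mem' := by
        intro i
        rw [DirectSum.decompose_zero]
        simpa using Submodule.zero_mem _
      smul_mem' := by
        intro r m hm i
        have hrep : r • m = ∑ d ∈ DFinsupp.support (DirectSum.decompose 𝒜 r.unop),
            MulOpposite.op ((DirectSum.decompose 𝒜 r.unop d : GWA k μ)) • m := by
          conv_lhs => rw [← MulOpposite.op_unop r,
            ← DirectSum.sum_support_decompose 𝒜 r.unop]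
          rw [show MulOpposite.op (∑ d ∈ DFinsupp.support (DirectSum.decompose 𝒜 r.unop),
              ((DirectSum.decompose 𝒜 r.unop d : GWA k μ)))
              = ∑ d ∈ DFinsupp.support (DirectSum.decompose 𝒜 r.unop),
              MulOpposite.op ((DirectSum.decompose 𝒜 r.unop d : GWA k μ)) from
            map_sum MulOpposite.opAddEquiv _ _, Finset.sum_smul]
        rw [hrep]
        rw [show (DirectSum.decompose ℳ
              (∑ d ∈ DFinsupp.support (DirectSum.decompose 𝒜 r.unop),
                MulOpposite.op ((DirectSum.decompose 𝒜 r.unop d : GWA k μ)) • m) i : M)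
            = ∑ d ∈ DFinsupp.support (DirectSum.decompose 𝒜 r.unop),
              (DirectSum.decompose ℳ
                (MulOpposite.op ((DirectSum.decompose 𝒜 r.unop d : GWA k μ)) • m) i : M) from ?_]
        · refine Submodule.sum_mem _ ?_
          intro d _
          rw [hdec_lemma k μ ℳ 𝒜 hcompat d _ (DirectSum.decompose 𝒜 r.unop d).2 m i]
          exact Submodule.smul_mem _ _ (hm (i - d))
        · rw [DirectSum.decompose_sum, DFinsupp.finset_sum_apply]
          push_cast
          rfl } with hP
  have hle : kappa k μ (M := M) ≤ P := by
    rw [kappa]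
    rw [Submodule.span_le]
    rintro w (⟨m', rfl⟩ | ⟨m', rfl⟩)
    · intro i
      rw [hdec_lemma k μ ℳ 𝒜 hcompat (μ : ℤ) _ (hxp k μ 𝒜 hx) m' i]
      exact mem_kappa_x k μ _
    · intro i
      rw [hdec_lemma k μ ℳ 𝒜 hcompat (-(μ : ℤ)) _ (hyp k μ 𝒜 hy) m' i]
      exact mem_kappa_y k μ _
  exact fun m hm => hle hm

lemma kappa_le (hμ : 0 < μ) [CharZero k]
    (𝒜 : ℤ → Submodule k (GWA k μ)) [GradedRing 𝒜]
    (hx : xA k μ ∈ 𝒜 1) (hy : yA k μ ∈ 𝒜 (-1))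
    (hcompat : ∀ (i j : ℤ), ∀ a ∈ 𝒜 i, ∀ m ∈ ℳ j, (MulOpposite.op a) • m ∈ ℳ (j + i))
    (N : Submodule (GWA k μ)ᵐᵒᵖ M)
    (hNgr : ∀ m ∈ N, ∀ i : ℤ, (DirectSum.decompose ℳ m i : M) ∈ N)
    (hfd : FiniteDimensional k (M ⧸ N)) :
    kappa k μ (M := M) ≤ N := by
  obtain ⟨hX, hY⟩ := ann_mu k μ ℳ 𝒜 hx hy hcompat N hNgr hfd
  rw [kappa, Submodule.span_le]
  rintro w (⟨m', rfl⟩ | ⟨m', rfl⟩)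
  · exact hX m'
  · exact hY m'

lemma kappa_fd (hμ : 0 < μ) [Module.Finite (GWA k μ)ᵐᵒᵖ M] :
    FiniteDimensional k (M ⧸ kappa k μ (M := M)) := by
  classical
  set Q := M ⧸ kappa k μ (M := M) with hQ
  set Tsub : Submodule k (GWA k μ) :=
    { carrier := {a | ∀ v : Q, MulOpposite.op a • v = 0}
      add_mem' := by
        intro a b ha hb v
        rw [MulOpposite.op_add, add_smul, ha v, hb v, add_zero]
      zero_mem' := by
        intro v
        rw [MulOpposite.op_zero, zero_smul]
      smul_mem' := by
        intro c a ha v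
        rw [MulOpposite.op_smul, smul_assoc, ha v, smul_zero] } with hT
  have hl : ∀ (b : GWA k μ), ∀ t ∈ Tsub, b * t ∈ Tsub := by
    intro b t ht v
    rw [MulOpposite.op_mul, mul_smul]
    exact ht _
  have hr : ∀ t ∈ Tsub, ∀ (b : GWA k μ), t * b ∈ Tsub := by
    intro t ht b v
    rw [MulOpposite.op_mul, mul_smul, ht v, smul_zero]
  have hxT : xA k μ ^ μ ∈ Tsub := by
    intro v
    obtain ⟨m, rfl⟩ := (kappa k μ (M := M)).mkQ_surjective v
    rw [← map_smul, Submodule.mkQ_apply, Submodule.Quotient.mk_eq_zero]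
    exact mem_kappa_x k μ m
  have hyT : yA k μ ^ μ ∈ Tsub := by
    intro v
    obtain ⟨m, rfl⟩ := (kappa k μ (M := M)).mkQ_surjective v
    rw [← map_smul, Submodule.mkQ_apply, Submodule.Quotient.mk_eq_zero]
    exact mem_kappa_y k μ m
  have hFtop := span_le_aux k μ hμ Tsub hl hr hxT hyT
  obtain ⟨Sg, hSg⟩ := Module.Finite.fg_top (R := (GWA k μ)ᵐᵒᵖ) (M := M)
  set genset : Set Q :=
    (fun p : GWA k μ × M => MulOpposite.op p.1 • (kappa k μ (M := M)).mkQ p.2) ''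
      (MonSet k μ ×ˢ (Sg : Set M)) with hgen
  set W : Submodule k Q := Submodule.span k genset with hW
  have claim1 : ∀ u ∈ Submodule.span k (MonSet k μ) ⊔ Tsub, ∀ m ∈ Sg,
      MulOpposite.op u • (kappa k μ (M := M)).mkQ m ∈ W := by
    intro u hu m hm
    obtain ⟨g, hg, t, ht, rfl⟩ := Submodule.mem_sup.mp hu
    rw [MulOpposite.op_add, add_smul]
    refine W.add_mem ?_ ?_
    · refine Submodule.span_induction ?_ ?_ ?_ ?_ hg
      · intro w hw
        exact Submodule.subset_span ⟨(w, m), ⟨hw, hm⟩, rfl⟩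
      · rw [MulOpposite.op_zero, zero_smul]
        exact W.zero_mem
      · intro u1 u2 _ _ h1 h2
        rw [MulOpposite.op_add, add_smul]
        exact W.add_mem h1 h2
      · intro c u1 _ h1
        rw [MulOpposite.op_smul, smul_assoc]
        exact W.smul_mem _ h1
    · rw [ht _]
      exact W.zero_mem
  have claim2 : ∀ (c : GWA k μ), ∀ v ∈ W, MulOpposite.op c • v ∈ W := by
    intro c v hv
    refine Submodule.span_induction ?_ ?_ ?_ ?_ hv
    · rintro w ⟨⟨u, m⟩, ⟨hu, hm⟩, rfl⟩
      simp only
      rw [← mul_smul, ← MulOpposite.op_mul]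
      exact claim1 (u * c) (hFtop _) m hm
    · rw [smul_zero]; exact W.zero_mem
    · intro v1 v2 _ _ h1 h2
      rw [smul_add]; exact W.add_mem h1 h2
    · intro c1 v1 _ h1
      rw [smul_comm]; exact W.smul_mem _ h1
  have hall : ∀ m : M, (kappa k μ (M := M)).mkQ m ∈ W := by
    intro m
    have hmem : m ∈ Submodule.span (GWA k μ)ᵐᵒᵖ (Sg : Set M) := by rw [hSg]; trivial
    refine Submodule.span_induction ?_ ?_ ?_ ?_ hmem
    · intro m' hm'
      have := claim1 1 (hFtop 1) m' hm'
      rwa [MulOpposite.op_one, one_smul] at this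
    · rw [map_zero]; exact W.zero_mem
    · intro m1 m2 _ _ h1 h2
      rw [map_add]; exact W.add_mem h1 h2
    · intro r m1 _ h1
      rw [map_smul, ← MulOpposite.op_unop r]
      exact claim2 _ _ h1
  have hWtop : W = ⊤ := by
    rw [eq_top_iff]
    intro v _
    obtain ⟨m, rfl⟩ := (kappa k μ (M := M)).mkQ_surjective v
    exact hall m
  have : Module.Finite k Q := by
    rw [Module.finite_def, Submodule.fg_def]
    exact ⟨genset, Set.Finite.image _ ((MonSet_finite k μ).prod Sg.finite_toSet), by
      rw [← hW, hWtop]⟩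
  exact this

end Kappa

end Stmt15Aux

/-- let `A = A(z(z+μ))`, `μ > 0`, with its `ℤ`-grading (`deg x = 1`,
`deg y = -1`, `deg z = 0`).  Every finitely generated graded right `A`-module `M`
(a graded `Aᵐᵒᵖ`-module) has a unique smallest graded submodule `κ(M) ⊆ M` such that
`M/κ(M)` is finite-dimensional over `k`. -/
theorem stmt15 (k : Type) [Field k] [IsAlgClosed k] [CharZero k] (μ : ℕ) (hμ : 0 < μ)
    -- the ℤ-grading on A, with deg x = 1, deg y = -1, deg z = 0:
    (𝒜 : ℤ → Submodule k (GWA k μ)) [GradedRing 𝒜]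
    (hx : xA k μ ∈ 𝒜 1) (hy : yA k μ ∈ 𝒜 (-1)) (hz : zA k μ ∈ 𝒜 0)
    -- a finitely generated graded right A-module M:
    (M : Type) [AddCommGroup M] [Module (GWA k μ)ᵐᵒᵖ M] [Module k M]
    [IsScalarTower k (GWA k μ)ᵐᵒᵖ M] [Module.Finite (GWA k μ)ᵐᵒᵖ M]
    (ℳ : ℤ → Submodule k M) [DirectSum.Decomposition ℳ]
    (hcompat : ∀ (i j : ℤ), ∀ a ∈ 𝒜 i, ∀ m ∈ ℳ j, (MulOpposite.op a) • m ∈ ℳ (j + i)) :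
    ∃! κ : Submodule (GWA k μ)ᵐᵒᵖ M,
      (∀ m ∈ κ, ∀ i : ℤ, (DirectSum.decompose ℳ m i : M) ∈ κ) ∧
      FiniteDimensional k (M ⧸ κ) ∧
      ∀ N : Submodule (GWA k μ)ᵐᵒᵖ M,
        (∀ m ∈ N, ∀ i : ℤ, (DirectSum.decompose ℳ m i : M) ∈ N) →
        FiniteDimensional k (M ⧸ N) → κ ≤ N := by
  classical
  have hκgr := Stmt15Aux.kappa_graded k μ ℳ 𝒜 hx hy hcompat
  have hκfd := Stmt15Aux.kappa_fd k μ (M := M) hμ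
  have hκle : ∀ N : Submodule (GWA k μ)ᵐᵒᵖ M,
      (∀ m ∈ N, ∀ i : ℤ, (DirectSum.decompose ℳ m i : M) ∈ N) →
      FiniteDimensional k (M ⧸ N) → Stmt15Aux.kappa k μ (M := M) ≤ N :=
    fun N hg hfd => Stmt15Aux.kappa_le k μ ℳ hμ 𝒜 hx hy hcompat N hg hfd
  refine ⟨Stmt15Aux.kappa k μ (M := M), ⟨hκgr, hκfd, hκle⟩, ?_⟩
  rintro N ⟨hg, hfd, hmin⟩
  exact le_antisymm (hmin _ hκgr hκfd) (hκle N hg hfd)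
end
end

section
/- In the polynomial ring k[z][b_n : n ∈ J] for a finite set J ⊂ ℤ, if an element a lies, for some j ∈ J, in both ideals (b_j + (z+j)) + (b_n - (z+n) : n ∈ J \ {j}) and (b_j - (z+j)) + (b_n - (z+n) : n ∈ J \ {j}), then a lies in (b_j^2 - (z+j)^2) + (b_n - (z+n) : n ∈ J \ {j}). -/
noncomputable section
open MvPolynomial

/-- The polynomial ring `k[z][b_n : n ∈ J]` for a finite set `J ⊆ ℤ`. -/
abbrev SJ (k : Type) [Field k] (J : Finset ℤ) := MvPolynomial (Option {n : ℤ // n ∈ J}) k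

/-- The variable `z`. -/
def zJ (k : Type) [Field k] (J : Finset ℤ) : SJ k J := X none

/-- The variable `b_n` for `n ∈ J`. -/
def bJ (k : Type) [Field k] (J : Finset ℤ) (n : {n : ℤ // n ∈ J}) : SJ k J := X (some n)

namespace Stmt17Aux

variable (k : Type) [Field k] (J : Finset ℤ) (j : {n : ℤ // n ∈ J})

/-- The quotient map to `k[Y][X]`, sending `z ↦ C Y`, `b_j ↦ X`, `b_n ↦ C Y + n`. -/
def phi : SJ k J →ₐ[k] Polynomial (Polynomial k) :=
  aeval fun i => i.elim (Polynomial.C Polynomial.X)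
    fun n => if n = j then Polynomial.X
      else Polynomial.C Polynomial.X + ((n : ℤ) : Polynomial (Polynomial k))

/-- A section of `phi`. -/
def psi : Polynomial (Polynomial k) →ₐ[k] SJ k J :=
  Polynomial.aevalTower (Polynomial.aeval (zJ k J)) (bJ k J j)

/-- The ideal of the common generators. -/
def Kid : Ideal (SJ k J) :=
  Ideal.span (Set.range fun n : {n : {n : ℤ // n ∈ J} // n ≠ j} =>
    bJ k J n.1 - (zJ k J + ((n.1 : ℤ) : SJ k J)))

lemma phi_z : phi k J j (zJ k J) = Polynomial.C Polynomial.X := by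
  simp [phi, zJ]

lemma phi_bj : phi k J j (bJ k J j) = Polynomial.X := by
  simp [phi, bJ]

lemma phi_bn (n : {n : ℤ // n ∈ J}) (hn : n ≠ j) :
    phi k J j (bJ k J n) = Polynomial.C Polynomial.X + ((n : ℤ) : Polynomial (Polynomial k)) := by
  simp [phi, bJ, hn]

lemma psi_CX : psi k J j (Polynomial.C Polynomial.X) = zJ k J := by
  simp [psi]

lemma psi_X : psi k J j Polynomial.X = bJ k J j := by
  simp [psi]

lemma key (x : SJ k J) : x - psi k J j (phi k J j x) ∈ Kid k J j := by
  induction x using MvPolynomial.induction_on with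
  | C r =>
      have : phi k J j (C r) = Polynomial.C (Polynomial.C r) := by
        simp [phi, MvPolynomial.algHom_C]
      rw [this]
      have : psi k J j (Polynomial.C (Polynomial.C r)) = C r := by
        simp [psi, Polynomial.aeval_C]
      rw [this, sub_self]
      exact zero_mem _
  | add p q hp hq =>
      have h : p + q - psi k J j (phi k J j (p + q)) =
          (p - psi k J j (phi k J j p)) + (q - psi k J j (phi k J j q)) := by
        rw [map_add, map_add]; ring
      rw [h]; exact add_mem hp hq
  | mul_X p i hp =>
      have hXi : X i - psi k J j (phi k J j (X i)) ∈ Kid k J j := by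
        match i with
        | none =>
            have : X (none : Option {n : ℤ // n ∈ J}) = zJ k J := rfl
            rw [this, phi_z, psi_CX, sub_self]; exact zero_mem _
        | some n =>
            have hb : X (some n) = bJ k J n := rfl
            by_cases hn : n = j
            · subst hn
              rw [hb, phi_bj, psi_X, sub_self]; exact zero_mem _
            · rw [hb, phi_bn k J j n hn, map_add, psi_CX, map_intCast]
              exact Ideal.subset_span ⟨⟨n, hn⟩, rfl⟩
      have h : p * X i - psi k J j (phi k J j (p * X i)) =
          p * (X i - psi k J j (phi k J j (X i))) +
          (p - psi k J j (phi k J j p)) * psi k J j (phi k J j (X i)) := by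
        rw [map_mul, map_mul]; ring
      rw [h]
      exact add_mem (Ideal.mul_mem_left _ _ hXi) (Ideal.mul_mem_right _ _ hp)

lemma Kid_le_ker : Kid k J j ≤ RingHom.ker (phi k J j).toRingHom := by
  rw [Kid, Ideal.span_le]
  rintro _ ⟨n, rfl⟩
  simp only [SetLike.mem_coe, RingHom.mem_ker, AlgHom.toRingHom_eq_coe, RingHom.coe_coe,
    map_sub, map_add, map_intCast]
  rw [phi_bn k J j n.1 n.2, phi_z, sub_self]

end Stmt17Aux

/-- in `k[z][b_n : n ∈ J]`, if an element `a` lies in both ideals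
`(b_j + (z+j)) + (b_n - (z+n) : n ∈ J \ {j})` and `(b_j - (z+j)) + (b_n - (z+n) : n ∈ J \ {j})`,
then `a ∈ (b_j^2 - (z+j)^2) + (b_n - (z+n) : n ∈ J \ {j})`. -/
theorem stmt17 (k : Type) [Field k] [CharZero k] (J : Finset ℤ) (j : {n : ℤ // n ∈ J})
    (a : SJ k J)
    (h1 : a ∈ Ideal.span
      (insert (bJ k J j + (zJ k J + ((j : ℤ) : SJ k J)))
        (Set.range fun n : {n : {n : ℤ // n ∈ J} // n ≠ j} =>
          bJ k J n.1 - (zJ k J + ((n.1 : ℤ) : SJ k J)))))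
    (h2 : a ∈ Ideal.span
      (insert (bJ k J j - (zJ k J + ((j : ℤ) : SJ k J)))
        (Set.range fun n : {n : {n : ℤ // n ∈ J} // n ≠ j} =>
          bJ k J n.1 - (zJ k J + ((n.1 : ℤ) : SJ k J))))) :
    a ∈ Ideal.span
      (insert (bJ k J j ^ 2 - (zJ k J + ((j : ℤ) : SJ k J)) ^ 2)
        (Set.range fun n : {n : {n : ℤ // n ∈ J} // n ≠ j} =>
          bJ k J n.1 - (zJ k J + ((n.1 : ℤ) : SJ k J)))) := by
  classical
  set φ := Stmt17Aux.phi k J j with hφdef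
  set ψ := Stmt17Aux.psi k J j with hψdef
  set K := Stmt17Aux.Kid k J j with hKdef
  set d : Polynomial k := Polynomial.X + ((j : ℤ) : Polynomial k) with hd
  -- the value of φ on z + j
  have hφzj : φ (zJ k J + ((j : ℤ) : SJ k J)) = Polynomial.C d := by
    rw [map_add, Stmt17Aux.phi_z, map_intCast, hd, map_add, map_intCast]
  -- extract divisibility from hypotheses
  have hdvd : ∀ (c : SJ k J), a ∈ Ideal.span (insert c
      (Set.range fun n : {n : {n : ℤ // n ∈ J} // n ≠ j} =>
        bJ k J n.1 - (zJ k J + ((n.1 : ℤ) : SJ k J)))) → φ c ∣ φ a := by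
    intro c hc
    rw [Ideal.span_insert] at hc
    obtain ⟨u, hu, v, hv, rfl⟩ := Submodule.mem_sup.mp hc
    obtain ⟨w, rfl⟩ := Ideal.mem_span_singleton.mp hu
    have hv0 : φ v = 0 := Stmt17Aux.Kid_le_ker k J j hv
    rw [map_add, hv0, add_zero, map_mul]
    exact Dvd.intro _ rfl
  have h1' : Polynomial.X - Polynomial.C (-d) ∣ φ a := by
    have := hdvd _ h1
    rw [map_add, Stmt17Aux.phi_bj, hφzj] at this
    rw [map_neg, sub_neg_eq_add]
    exact this
  have h2' : Polynomial.X - Polynomial.C d ∣ φ a := by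
    have := hdvd _ h2
    rwa [map_sub, Stmt17Aux.phi_bj, hφzj] at this
  -- combine divisibilities
  obtain ⟨q, hq⟩ := h2'
  have hdne : d ≠ 0 := by
    rw [hd, ← map_intCast (Polynomial.C : k →+* Polynomial k)]
    exact Polynomial.X_add_C_ne_zero _
  have hprime : Prime (Polynomial.X - Polynomial.C (-d)) := Polynomial.prime_X_sub_C _
  have hnd : ¬ (Polynomial.X - Polynomial.C (-d) ∣ Polynomial.X - Polynomial.C d) := by
    rw [Polynomial.dvd_iff_isRoot]
    intro h
    simp only [Polynomial.IsRoot, Polynomial.eval_sub, Polynomial.eval_X, Polynomial.eval_C] at h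
    have : (2 : Polynomial k) * d = 0 := by linear_combination -h
    rcases mul_eq_zero.mp this with h2 | h2
    · exact two_ne_zero h2
    · exact hdne h2
  have hq' : Polynomial.X - Polynomial.C (-d) ∣ q := by
    rcases (hprime.dvd_or_dvd (hq ▸ h1')) with h | h
    · exact absurd h hnd
    · exact h
  obtain ⟨w, hw⟩ := hq'
  have hφa : φ a = φ (bJ k J j ^ 2 - (zJ k J + ((j : ℤ) : SJ k J)) ^ 2) * w := by
    rw [map_sub, map_pow, map_pow, Stmt17Aux.phi_bj, hφzj, hq, hw, map_neg]
    ring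
  -- put everything back together
  have hfin : a = (a - ψ (φ a))
      - ((bJ k J j ^ 2 - (zJ k J + ((j : ℤ) : SJ k J)) ^ 2)
          - ψ (φ (bJ k J j ^ 2 - (zJ k J + ((j : ℤ) : SJ k J)) ^ 2))) * ψ w
      + (bJ k J j ^ 2 - (zJ k J + ((j : ℤ) : SJ k J)) ^ 2) * ψ w := by
    rw [hφa, map_mul]; ring
  rw [hfin, Ideal.span_insert]
  refine Submodule.add_mem _ (Submodule.mem_sup_right ?_) (Submodule.mem_sup_left ?_)
  · exact sub_mem (Stmt17Aux.key k J j a)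
      (Ideal.mul_mem_right _ _ (Stmt17Aux.key k J j _))
  · exact Ideal.mem_span_singleton.mpr ⟨ψ w, rfl⟩
end
end

section
/- In the finitely generated ring R_J = k[z][b_n : n ∈ J]/(b_n^2 - (z+n)^2 : n ∈ J) for a finite set J ⊂ ℤ, the intersection of the ideals (b_n - (-1)^{ε(n)}(z+n) : n ∈ J) over all sign choices ε : J → {0,1} is the zero ideal; consequently R_J is reduced. -/
set_option maxHeartbeats 1000000
set_option synthInstance.maxHeartbeats 400000


noncomputable section
open MvPolynomial

/-- The ideal generated by `b_n^2 - (z+n)^2`, `n ∈ J`. -/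
def relJ (k : Type) [Field k] (J : Finset ℤ) : Ideal (SJ k J) :=
  Ideal.span (Set.range fun n : {n : ℤ // n ∈ J} =>
    bJ k J n ^ 2 - (zJ k J + ((n : ℤ) : SJ k J)) ^ 2)

/-- The ring `R_J = k[z][b_n : n ∈ J]/(b_n^2 - (z+n)^2 : n ∈ J)`. -/
abbrev RJ (k : Type) [Field k] (J : Finset ℤ) := SJ k J ⧸ relJ k J

/-- The image of `b_n` in `R_J`. -/
def bRJ (k : Type) [Field k] (J : Finset ℤ) (n : {n : ℤ // n ∈ J}) : RJ k J :=
  Ideal.Quotient.mk (relJ k J) (bJ k J n)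

/-- The image of `z` in `R_J`. -/
def zRJ (k : Type) [Field k] (J : Finset ℤ) : RJ k J :=
  Ideal.Quotient.mk (relJ k J) (zJ k J)

namespace Stmt18

variable (k : Type) [Field k] (J : Finset ℤ)

abbrev V := {n : ℤ // n ∈ J}

/-- evaluation to `k[X]` with sign choice ε -/
def φ (ε : V J → Fin 2) : SJ k J →ₐ[k] Polynomial k :=
  aeval fun i => Option.elim i Polynomial.X
    fun n => (-1) ^ (ε n : ℕ) * (Polynomial.X + Polynomial.C ((n : ℤ) : k))

@[simp] lemma φ_z (ε : V J → Fin 2) : φ k J ε (zJ k J) = Polynomial.X := by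
  simp [φ, zJ]

@[simp] lemma φ_b (ε : V J → Fin 2) (n : V J) :
    φ k J ε (bJ k J n) = (-1) ^ (ε n : ℕ) * (Polynomial.X + Polynomial.C ((n : ℤ) : k)) := by
  simp [φ, bJ]

@[simp] lemma φ_int (ε : V J → Fin 2) (m : ℤ) :
    φ k J ε ((m : ℤ) : SJ k J) = Polynomial.C ((m : ℤ) : k) := by
  rw [map_intCast]
  simp [Polynomial.C_eq_intCast]

lemma sq_sign {R : Type*} [CommRing R] (e : ℕ) (y : R) : ((-1) ^ e * y) ^ 2 = y ^ 2 := by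
  rw [mul_pow, ← pow_mul, mul_comm e 2, pow_mul, neg_one_sq, one_pow, one_mul]

lemma relJ_le_ker (ε : V J → Fin 2) : relJ k J ≤ RingHom.ker (φ k J ε).toRingHom := by
  rw [relJ, Ideal.span_le]
  rintro _ ⟨n, rfl⟩
  simp only [SetLike.mem_coe, RingHom.mem_ker, map_sub, map_pow, map_add, AlgHom.toRingHom_eq_coe,
    RingHom.coe_coe, φ_b, φ_z, φ_int]
  rw [sq_sign]
  ring

instance : Algebra (Polynomial k) (SJ k J) := (Polynomial.aeval (zJ k J)).toRingHom.toAlgebra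

lemma algMap_apply (p : Polynomial k) :
    algebraMap (Polynomial k) (SJ k J) p = Polynomial.aeval (zJ k J) p := rfl

lemma smul_def' (p : Polynomial k) (s : SJ k J) :
    p • s = Polynomial.aeval (zJ k J) p * s := Algebra.smul_def p s

lemma intCast_eq_C (m : ℤ) : ((m : ℤ) : SJ k J) = C ((m : ℤ) : k) :=
  (map_intCast (C : k →+* SJ k J) m).symm

lemma φ_algebraMap (ε : V J → Fin 2) (p : Polynomial k) :
    φ k J ε (algebraMap (Polynomial k) (SJ k J) p) = p := by
  rw [algMap_apply, ← Polynomial.aeval_algHom_apply, φ_z, Polynomial.aeval_X_left_apply]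

/-- squarefree monomials in the `b` variables -/
def mon (T : Finset (V J)) : SJ k J := ∏ n ∈ T, bJ k J n

def W : Submodule (Polynomial k) (SJ k J) := Submodule.span (Polynomial k) (Set.range (mon k J))

def U : Submodule (Polynomial k) (SJ k J) :=
  W k J ⊔ (relJ k J).restrictScalars (Polynomial k)

lemma mon_mem_U (T : Finset (V J)) : mon k J T ∈ U k J :=
  le_sup_left (α := Submodule (Polynomial k) (SJ k J))
    (Submodule.subset_span ⟨T, rfl⟩)

lemma rel_mem_U {r : SJ k J} (hr : r ∈ relJ k J) : r ∈ U k J :=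
  le_sup_right (α := Submodule (Polynomial k) (SJ k J)) hr

lemma mon_mulX_mem (T : Finset (V J)) (i : Option (V J)) :
    mon k J T * X i ∈ U k J := by
  match i with
  | none =>
    have : mon k J T * X none = (Polynomial.X : Polynomial k) • mon k J T := by
      rw [smul_def', Polynomial.aeval_X, mul_comm]; rfl
    rw [this]
    exact Submodule.smul_mem _ _ (mon_mem_U k J T)
  | some n =>
    by_cases hn : n ∈ T
    · have h1 : mon k J T * X (some n)
          = (bJ k J n ^ 2 - (zJ k J + ((n : ℤ) : SJ k J)) ^ 2) * mon k J (T.erase n)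
            + ((Polynomial.X + Polynomial.C ((n : ℤ) : k)) ^ 2 : Polynomial k)
              • mon k J (T.erase n) := by
        rw [smul_def']
        have : mon k J T = bJ k J n * mon k J (T.erase n) := by
          rw [mon, mon, Finset.mul_prod_erase _ _ hn]
        rw [this]
        simp only [map_pow, map_add, Polynomial.aeval_X, Polynomial.aeval_C]
        rw [intCast_eq_C]
        show _ = _ + (zJ k J + C ((n:ℤ):k)) ^ 2 * _
        rw [bJ]; ring
      rw [h1]
      refine add_mem (rel_mem_U k J ?_) (Submodule.smul_mem _ _ (mon_mem_U k J _))
      exact Ideal.mul_mem_right _ _ (Ideal.subset_span ⟨n, rfl⟩)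
    · have : mon k J T * X (some n) = mon k J (insert n T) := by
        rw [mon, mon, Finset.prod_insert hn, mul_comm]; rfl
      rw [this]; exact mon_mem_U k J _

lemma mulX_mem {g : SJ k J} (hg : g ∈ U k J) (i : Option (V J)) :
    g * X i ∈ U k J := by
  obtain ⟨w, hw, r, hr, rfl⟩ := Submodule.mem_sup.mp hg
  rw [add_mul]
  refine add_mem ?_ (rel_mem_U k J (Ideal.mul_mem_right _ _ hr))
  refine Submodule.span_induction ?_ ?_ ?_ ?_ hw
  · rintro _ ⟨T, rfl⟩; exact mon_mulX_mem k J T i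
  · rw [zero_mul]; exact zero_mem _
  · intro a b _ _ ha hb; rw [add_mul]; exact add_mem ha hb
  · intro p a _ ha; rw [smul_mul_assoc]; exact Submodule.smul_mem _ _ ha

lemma total (f : SJ k J) : f ∈ U k J := by
  induction f using MvPolynomial.induction_on with
  | C a =>
    have : (C a : SJ k J) = (Polynomial.C a) • mon k J ∅ := by
      rw [smul_def', Polynomial.aeval_C, mon, Finset.prod_empty, mul_one]
      rfl
    rw [this]
    exact Submodule.smul_mem _ _ (mon_mem_U k J ∅)
  | add f g hf hg => exact add_mem hf hg
  | mul_X f i hf => exact mulX_mem k J hf i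

def sgn (ε : V J → Fin 2) (T : Finset (V J)) : Polynomial k :=
  ∏ n ∈ T, (-1 : Polynomial k) ^ (ε n : ℕ)

def cpol (T : Finset (V J)) : Polynomial k :=
  ∏ n ∈ T, (Polynomial.X + Polynomial.C ((n : ℤ) : k))

lemma char_sum (U : Finset (V J)) :
    ∑ ε : V J → Fin 2, sgn k J ε U
      = if U = ∅ then (2 : Polynomial k) ^ Fintype.card (V J) else 0 := by
  have hg : ∀ ε : V J → Fin 2, sgn k J ε U
      = ∏ n : V J, (if n ∈ U then (-1 : Polynomial k) ^ (ε n : ℕ) else 1) := by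
    intro ε
    rw [sgn]
    calc ∏ n ∈ U, (-1 : Polynomial k) ^ (ε n : ℕ)
        = ∏ n ∈ U, (if n ∈ U then (-1 : Polynomial k) ^ (ε n : ℕ) else 1) :=
          Finset.prod_congr rfl fun n hn => (if_pos hn).symm
      _ = _ := Finset.prod_subset (Finset.subset_univ U) fun n _ hn => if_neg hn
  simp_rw [hg]
  rw [← Fintype.prod_sum (R := Polynomial k) (κ := fun _ : V J => Fin 2)
    (fun n s => if n ∈ U then (-1 : Polynomial k) ^ (s : ℕ) else 1)]
  rcases Finset.eq_empty_or_nonempty U with h | h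
  · subst h
    simp [Finset.card_univ]
  · obtain ⟨m, hm⟩ := h
    rw [if_neg (Finset.nonempty_iff_ne_empty.mp ⟨m, hm⟩)]
    refine Finset.prod_eq_zero (Finset.mem_univ m) ?_
    simp [Fin.sum_univ_two, hm]

lemma sgn_mul (ε : V J → Fin 2) (T₀ T : Finset (V J)) :
    sgn k J ε T₀ * sgn k J ε T = sgn k J ε (symmDiff T₀ T) := by
  have hsq : ∀ n : V J, ((-1 : Polynomial k) ^ (ε n : ℕ)) * ((-1) ^ (ε n : ℕ)) = 1 := by
    intro n
    rw [← pow_add, ← two_mul, pow_mul, neg_one_sq, one_pow]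
  have hu : T₀ ∪ T = symmDiff T₀ T ∪ (T₀ ∩ T) := by
    have h := (symmDiff_sup_inf T₀ T).symm
    simpa [Finset.sup_eq_union, Finset.inf_eq_inter] using h
  have hd : Disjoint (symmDiff T₀ T) (T₀ ∩ T) := by
    have := disjoint_symmDiff_inf T₀ T
    rwa [Finset.inf_eq_inter] at this
  rw [sgn, sgn, ← Finset.prod_union_inter, hu, Finset.prod_union hd, mul_assoc,
    ← Finset.prod_mul_distrib,
    Finset.prod_congr rfl fun n _ => hsq n, Finset.prod_const_one, mul_one]
  rfl

lemma indep [CharZero k] (p : Finset (V J) → Polynomial k)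
    (h : ∀ ε : V J → Fin 2, ∑ T : Finset (V J), p T * (sgn k J ε T * cpol k J T) = 0)
    (T₀ : Finset (V J)) : p T₀ = 0 := by
  have h2 : ∑ ε : V J → Fin 2, sgn k J ε T₀ *
      (∑ T : Finset (V J), p T * (sgn k J ε T * cpol k J T)) = 0 := by
    simp [h]
  have h3 : ∀ ε : V J → Fin 2,
      sgn k J ε T₀ * (∑ T : Finset (V J), p T * (sgn k J ε T * cpol k J T))
      = ∑ T : Finset (V J), p T * cpol k J T * sgn k J ε (symmDiff T₀ T) := by
    intro ε
    rw [Finset.mul_sum]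
    refine Finset.sum_congr rfl fun T _ => ?_
    rw [← sgn_mul k J ε T₀ T]; ring
  rw [Finset.sum_congr rfl fun ε _ => h3 ε, Finset.sum_comm] at h2
  have h4 : ∀ T : Finset (V J),
      ∑ ε : V J → Fin 2, p T * cpol k J T * sgn k J ε (symmDiff T₀ T)
      = if T = T₀ then p T * cpol k J T * 2 ^ Fintype.card (V J) else 0 := by
    intro T
    rw [← Finset.mul_sum, char_sum]
    by_cases hT : T = T₀
    · rw [if_pos (by rw [hT, symmDiff_self]; rfl), if_pos hT]
    · rw [if_neg (fun hc => hT ?_), if_neg hT, mul_zero]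
      have : symmDiff T₀ T = ⊥ := hc
      exact (symmDiff_eq_bot.mp this).symm
  rw [Finset.sum_congr rfl fun T _ => h4 T, Finset.sum_ite_eq' Finset.univ T₀] at h2
  rw [if_pos (Finset.mem_univ T₀)] at h2
  have h2' : p T₀ * cpol k J T₀ = 0 ∨ (2 : Polynomial k) ^ Fintype.card (V J) = 0 :=
    mul_eq_zero.mp h2
  have hc : cpol k J T₀ ≠ 0 := by
    rw [cpol]
    exact Finset.prod_ne_zero_iff.mpr fun n _ => Polynomial.X_add_C_ne_zero _
  rcases h2' with h5 | h5
  · rcases mul_eq_zero.mp h5 with h6 | h6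
    · exact h6
    · exact absurd h6 hc
  · exact absurd h5 (pow_ne_zero _ two_ne_zero)

lemma φ_mon (ε : V J → Fin 2) (T : Finset (V J)) :
    φ k J ε (mon k J T) = sgn k J ε T * cpol k J T := by
  rw [mon, map_prod, sgn, cpol, ← Finset.prod_mul_distrib]
  exact Finset.prod_congr rfl fun n _ => φ_b k J ε n

/-- The core lemma: a polynomial killed by all sign evaluations lies in `relJ`. -/
lemma core [CharZero k] (f : SJ k J) (h : ∀ ε : V J → Fin 2, φ k J ε f = 0) :
    f ∈ relJ k J := by
  obtain ⟨w, hw, r, hr, rfl⟩ := Submodule.mem_sup.mp (total k J f)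
  rw [W] at hw
  obtain ⟨p, hp⟩ := (Submodule.mem_span_range_iff_exists_fun (Polynomial k)).mp hw
  have hφr : ∀ ε : V J → Fin 2, φ k J ε r = 0 := fun ε => relJ_le_ker k J ε hr
  have hφw : ∀ ε : V J → Fin 2,
      ∑ T : Finset (V J), p T * (sgn k J ε T * cpol k J T) = 0 := by
    intro ε
    have h0 := h ε
    rw [map_add, hφr ε, add_zero, ← hp, map_sum] at h0
    rw [← h0]
    refine Finset.sum_congr rfl fun T _ => ?_
    rw [Algebra.smul_def, map_mul, φ_algebraMap, φ_mon]
  have hz : ∀ T, p T = 0 := indep k J p hφw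
  have hw0 : w = 0 := by
    rw [← hp]
    simp [hz]
  rw [hw0, zero_add]
  exact hr

/-- The induced evaluation on the quotient `R_J`. -/
def ψ (ε : V J → Fin 2) : RJ k J →+* Polynomial k :=
  Ideal.Quotient.lift (relJ k J) (φ k J ε).toRingHom (fun _ ha => relJ_le_ker k J ε ha)

lemma ψ_mk (ε : V J → Fin 2) (f : SJ k J) :
    ψ k J ε (Ideal.Quotient.mk (relJ k J) f) = φ k J ε f :=
  Ideal.Quotient.lift_mk _ _ _

lemma span_le_ker (ε : V J → Fin 2) :
    Ideal.span (Set.range fun n : V J =>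
        bRJ k J n - (-1) ^ (ε n : ℕ) * (zRJ k J + ((n : ℤ) : RJ k J)))
      ≤ RingHom.ker (ψ k J ε) := by
  rw [Ideal.span_le]
  rintro _ ⟨n, rfl⟩
  simp only [SetLike.mem_coe, RingHom.mem_ker, map_sub, map_mul, map_pow, map_neg, map_one,
    map_add, map_intCast, bRJ, zRJ, ψ_mk, φ_b, φ_z]
  ring

lemma ker_eval_eq_zero [CharZero k] (x : RJ k J)
    (h : ∀ ε : V J → Fin 2, ψ k J ε x = 0) : x = 0 := by
  obtain ⟨f, rfl⟩ := Ideal.Quotient.mk_surjective x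
  rw [Ideal.Quotient.eq_zero_iff_mem]
  refine core k J f fun ε => ?_
  rw [← ψ_mk k J ε f]
  exact h ε

end Stmt18

/-- in `R_J`, the intersection over all sign choices `ε : J → {0,1}` of the
ideals `(b_n - (-1)^{ε n}(z+n) : n ∈ J)` is the zero ideal; consequently `R_J` is reduced. -/
theorem stmt18 (k : Type) [Field k] [IsAlgClosed k] [CharZero k] (J : Finset ℤ) :
    (⨅ ε : {n : ℤ // n ∈ J} → Fin 2, Ideal.span (Set.range fun n : {n : ℤ // n ∈ J} =>
        bRJ k J n - (-1) ^ (ε n : ℕ) * (zRJ k J + ((n : ℤ) : RJ k J)))) = ⊥ ∧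
      IsReduced (RJ k J) := by
  constructor
  · refine le_antisymm ?_ bot_le
    intro x hx
    rw [Ideal.mem_bot]
    refine Stmt18.ker_eval_eq_zero k J x fun ε => ?_
    have hx' : x ∈ Ideal.span (Set.range fun n : {n : ℤ // n ∈ J} =>
        bRJ k J n - (-1) ^ (ε n : ℕ) * (zRJ k J + ((n : ℤ) : RJ k J))) :=
      (Submodule.mem_iInf _).mp hx ε
    exact Stmt18.span_le_ker k J ε hx'
  · have hinj : Function.Injective
        (Pi.ringHom (fun ε : {n : ℤ // n ∈ J} → Fin 2 => Stmt18.ψ k J ε)) := by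
      rw [injective_iff_map_eq_zero]
      intro x hx
      refine Stmt18.ker_eval_eq_zero k J x fun ε => ?_
      exact congrFun hx ε
    exact isReduced_of_injective _ hinj

end
end
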